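/- arXiv:2410.07467 — 10 statements merged into one kernel-verified Lean document; each statement's English description precedes it below -/
import Mathlib

section
/- An indecomposable permutation with exactly k inversions has at most k + 1 elements; hence the set of indecomposable permutations with exactly k inversions is finite. -/
def inversions {n : ℕ} (π : Equiv.Perm (Fin n)) : ℕ :=
  (Finset.univ.filter fun p : Fin n × Fin n => p.1 < p.2 ∧ π p.2 < π p.1).card

def Decomposable {n : ℕ} (π : Equiv.Perm (Fin n)) : Prop :=
  ∃ j : ℕ, 0 < j ∧ j < n ∧ ∀ i : Fin n, (i : ℕ) < j → (π i : ℕ) < j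

def Indecomposable {n : ℕ} (π : Equiv.Perm (Fin n)) : Prop :=
  0 < n ∧ ¬ Decomposable π

def invTable {n : ℕ} (π : Equiv.Perm (Fin n)) (i : Fin n) : ℕ :=
  (Finset.univ.filter fun j : Fin n => i < j ∧ π j < π i).card

def Avoids123 {n : ℕ} (π : Equiv.Perm (Fin n)) : Prop :=
  ¬ ∃ i j k : Fin n, i < j ∧ j < k ∧ π i < π j ∧ π j < π k

def Avoids132 {n : ℕ} (π : Equiv.Perm (Fin n)) : Prop :=
  ¬ ∃ i j k : Fin n, i < j ∧ j < k ∧ π i < π k ∧ π k < π j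

def Avoids213 {n : ℕ} (π : Equiv.Perm (Fin n)) : Prop :=
  ¬ ∃ i j k : Fin n, i < j ∧ j < k ∧ π j < π i ∧ π i < π k

def Avoids231 {n : ℕ} (π : Equiv.Perm (Fin n)) : Prop :=
  ¬ ∃ i j k : Fin n, i < j ∧ j < k ∧ π k < π i ∧ π i < π j

def Avoids312 {n : ℕ} (π : Equiv.Perm (Fin n)) : Prop :=
  ¬ ∃ i j k : Fin n, i < j ∧ j < k ∧ π j < π k ∧ π k < π i

def Avoids321 {n : ℕ} (π : Equiv.Perm (Fin n)) : Prop :=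
  ¬ ∃ i j k : Fin n, i < j ∧ j < k ∧ π k < π j ∧ π j < π i

def LTRMax {n : ℕ} (π : Equiv.Perm (Fin n)) (k : Fin n) : Prop :=
  ∀ i : Fin n, i < k → π i < π k

def revComp {n : ℕ} (π : Equiv.Perm (Fin n)) : Equiv.Perm (Fin n) :=
  Fin.revPerm * π * Fin.revPerm

lemma exists_cross {n : ℕ} (π : Equiv.Perm (Fin n)) (hπ : ¬ Decomposable π)
    {j : ℕ} (h0 : 0 < j) (hj : j < n) : ∃ b : Fin n, j ≤ (b : ℕ) ∧ ((π b : Fin n) : ℕ) < j := by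
  by_contra hc
  push_neg at hc
  apply hπ
  refine ⟨j, h0, hj, fun i hi => ?_⟩
  set T : Finset (Fin n) := Finset.univ.filter (fun b => j ≤ (b : ℕ)) with hT
  have hsub : T.image π ⊆ T := by
    intro v hv
    simp only [Finset.mem_image] at hv
    obtain ⟨b, hb, rfl⟩ := hv
    simp only [hT, Finset.mem_filter, Finset.mem_univ, true_and] at hb ⊢
    exact hc b hb
  have heq : T.image π = T :=
    Finset.eq_of_subset_of_card_le hsub (by rw [Finset.card_image_of_injective _ π.injective])
  by_contra hlt
  push_neg at hlt
  have hmem : π i ∈ T := by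
    simp only [hT, Finset.mem_filter, Finset.mem_univ, true_and]
    exact hlt
  rw [← heq] at hmem
  simp only [Finset.mem_image] at hmem
  obtain ⟨b, hb, hbe⟩ := hmem
  have hbi := π.injective hbe
  subst hbi
  simp only [hT, Finset.mem_filter, Finset.mem_univ, true_and] at hb
  omega

lemma exists_left {n : ℕ} (π : Equiv.Perm (Fin n)) {b : Fin n}
    (h : ((π b : Fin n) : ℕ) < (b : ℕ)) : ∃ a : Fin n, a < b ∧ π b < π a := by
  by_contra hc
  push_neg at hc
  have hsub : (Finset.Iic b).image π ⊆ Finset.Iic (π b) := by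
    intro v hv
    simp only [Finset.mem_image] at hv
    obtain ⟨a, ha, rfl⟩ := hv
    rcases eq_or_lt_of_le (Finset.mem_Iic.mp ha) with h1 | h1
    · subst h1; exact Finset.mem_Iic.mpr le_rfl
    · exact Finset.mem_Iic.mpr (hc a h1)
  have hcard := Finset.card_le_card hsub
  rw [Finset.card_image_of_injective _ π.injective, Fin.card_Iic, Fin.card_Iic] at hcard
  omega

lemma key {n : ℕ} (π : Equiv.Perm (Fin n)) (h : Indecomposable π) :
    n ≤ inversions π + 1 := by
  classical
  obtain ⟨hn, hd⟩ := h
  set inv := Finset.univ.filter fun p : Fin n × Fin n => p.1 < p.2 ∧ π p.2 < π p.1 with hinv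
  set Bset : ℕ → Finset (Fin n) :=
    fun j => Finset.univ.filter (fun b => j ≤ (b : ℕ) ∧ ((π b : Fin n) : ℕ) < j) with hBset
  have hBne : ∀ j, 0 < j → j < n → (Bset j).Nonempty := by
    intro j h0 hj
    obtain ⟨b, hb1, hb2⟩ := exists_cross π hd h0 hj
    exact ⟨b, by simp [hBset, hb1, hb2]⟩
  set B : ℕ → Fin n := fun j => if h : (Bset j).Nonempty then (Bset j).min' h else ⟨0, hn⟩
    with hBdef
  have hBmem : ∀ j, 0 < j → j < n → j ≤ ((B j : Fin n) : ℕ) ∧ ((π (B j) : Fin n) : ℕ) < j := by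
    intro j h0 hj
    have := (Bset j).min'_mem (hBne j h0 hj)
    simp only [hBset, Finset.mem_filter, Finset.mem_univ, true_and] at this
    simpa [hBdef, hBne j h0 hj] using this
  have hBmin : ∀ j, 0 < j → j < n → ∀ b : Fin n, j ≤ (b : ℕ) → ((π b : Fin n) : ℕ) < j →
      B j ≤ b := by
    intro j h0 hj b hb1 hb2
    have := Finset.min'_le (Bset j) b (by simp [hBset, hb1, hb2])
    simpa [hBdef, hBne j h0 hj] using this
  set Aset : Fin n → Finset (Fin n) :=
    fun b => Finset.univ.filter (fun a => π b < π a) with hAset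
  set A : Fin n → Fin n := fun b => if h : (Aset b).Nonempty then (Aset b).min' h else ⟨0, hn⟩
    with hAdef
  have hAprop : ∀ b : Fin n, ((π b : Fin n) : ℕ) < (b : ℕ) →
      A b < b ∧ π b < π (A b) ∧ ∀ a : Fin n, a < A b → ¬ π b < π a := by
    intro b hb
    obtain ⟨a, ha1, ha2⟩ := exists_left π hb
    have hne : (Aset b).Nonempty := ⟨a, by simp [hAset, ha2]⟩
    have hmem := (Aset b).min'_mem hne
    simp only [hAset, Finset.mem_filter, Finset.mem_univ, true_and] at hmem
    have hle : (Aset b).min' hne ≤ a := Finset.min'_le _ a (by simp [hAset, ha2])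
    refine ⟨?_, ?_, ?_⟩
    · simp only [hAdef, dif_pos hne]
      exact lt_of_le_of_lt hle ha1
    · simpa [hAdef, dif_pos hne] using hmem
    · intro a' ha' hpa'
      have := Finset.min'_le (Aset b) a' (by simp [hAset, hpa'])
      simp only [hAdef, dif_pos hne] at ha'
      exact absurd this (not_le.mpr ha')
  set f : ℕ → Fin n × Fin n := fun j =>
    if hj : j < n then
      (if (j : ℕ) < ((B j : Fin n) : ℕ) then (⟨j, hj⟩, B j) else (A (B j), B j))
    else (⟨0, hn⟩, ⟨0, hn⟩) with hf
  have hmaps : ∀ j ∈ Finset.Ioo 0 n, f j ∈ inv := by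
    intro j hj
    simp only [Finset.mem_Ioo] at hj
    obtain ⟨h0, hjn⟩ := hj
    obtain ⟨hb1, hb2⟩ := hBmem j h0 hjn
    simp only [hf, dif_pos hjn]
    by_cases hcase : (j : ℕ) < ((B j : Fin n) : ℕ)
    · rw [if_pos hcase]
      simp only [hinv, Finset.mem_filter, Finset.mem_univ, true_and]
      refine ⟨hcase, ?_⟩
      have hge : j ≤ ((π ⟨j, hjn⟩ : Fin n) : ℕ) := by
        by_contra hlt
        push_neg at hlt
        have := hBmin j h0 hjn ⟨j, hjn⟩ le_rfl hlt
        exact absurd hcase (not_lt.mpr this)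
      exact Fin.lt_def.mpr (by omega)
    · rw [if_neg hcase]
      push_neg at hcase
      have hvlt : ((π (B j) : Fin n) : ℕ) < ((B j : Fin n) : ℕ) := by omega
      obtain ⟨ha1, ha2, _⟩ := hAprop (B j) hvlt
      simp only [hinv, Finset.mem_filter, Finset.mem_univ, true_and]
      exact ⟨ha1, ha2⟩
  have hinj : Set.InjOn f (Finset.Ioo 0 n) := by
    -- key impossibility: cannot have j in "case 1" and j' in "case 2" with equal images
    have himp : ∀ j j' : ℕ, 0 < j → (hjn : j < n) → 0 < j' → j' < n →
        (j : ℕ) < ((B j : Fin n) : ℕ) → ¬ (j' : ℕ) < ((B j' : Fin n) : ℕ) →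
        ((⟨j, hjn⟩ : Fin n), B j) = (A (B j'), B j') → False := by
      intro j j' h0 hjn h0' hjn' hc1 hc2 heq
      obtain ⟨hb1, hb2⟩ := hBmem j h0 hjn
      obtain ⟨hb1', hb2'⟩ := hBmem j' h0' hjn'
      push_neg at hc2
      have hvlt : ((π (B j') : Fin n) : ℕ) < ((B j' : Fin n) : ℕ) := by omega
      obtain ⟨_, _, hmin⟩ := hAprop (B j') hvlt
      have hBB : B j = B j' := congrArg Prod.snd heq
      have hAj : A (B j') = ⟨j, hjn⟩ := (congrArg Prod.fst heq).symm
      apply hd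
      refine ⟨j, h0, hjn, fun i hi => ?_⟩
      have hiA : i < A (B j') := by
        rw [hAj]
        exact hi
      have := hmin i hiA
      have hle : ((π i : Fin n) : ℕ) ≤ ((π (B j') : Fin n) : ℕ) := by
        have := not_lt.mp this
        exact this
      rw [← hBB] at hle
      omega
    intro j hj j' hj' heq
    simp only [Finset.coe_Ioo, Set.mem_Ioo] at hj hj'
    obtain ⟨h0, hjn⟩ := hj
    obtain ⟨h0', hjn'⟩ := hj'
    obtain ⟨hb1, hb2⟩ := hBmem j h0 hjn
    obtain ⟨hb1', hb2'⟩ := hBmem j' h0' hjn'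
    simp only [hf, dif_pos hjn, dif_pos hjn'] at heq
    by_cases hc1 : (j : ℕ) < ((B j : Fin n) : ℕ) <;>
      by_cases hc2 : (j' : ℕ) < ((B j' : Fin n) : ℕ)
    · rw [if_pos hc1, if_pos hc2] at heq
      have := congrArg Prod.fst heq
      simpa [Fin.mk.injEq] using congrArg Fin.val this
    · rw [if_pos hc1, if_neg hc2] at heq
      exact absurd (himp j j' h0 hjn h0' hjn' hc1 hc2 heq) (fun x => x)
    · rw [if_neg hc1, if_pos hc2] at heq
      exact absurd (himp j' j h0' hjn' h0 hjn hc2 hc1 heq.symm) (fun x => x)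
    · rw [if_neg hc1, if_neg hc2] at heq
      have hBB : B j = B j' := congrArg Prod.snd heq
      push_neg at hc1 hc2
      have := congrArg Fin.val hBB
      omega
  have hcard := Finset.card_le_card_of_injOn f hmaps hinj
  rw [Nat.card_Ioo] at hcard
  unfold inversions
  rw [hinv] at hcard
  omega

/-- An indecomposable permutation with exactly `k` inversions has at most `k + 1`
elements; hence the set of indecomposable permutations with exactly `k` inversions
is finite. -/
theorem indecomposable_size_le_and_finite (k : ℕ) :
    (∀ (n : ℕ) (π : Equiv.Perm (Fin n)),
      Indecomposable π → inversions π = k → n ≤ k + 1) ∧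
    {p : Σ n : ℕ, Equiv.Perm (Fin n) |
      Indecomposable p.2 ∧ inversions p.2 = k}.Finite := by
  constructor
  · intro n π hind hinvv
    have := key π hind
    omega
  · have hsub : {p : Σ n : ℕ, Equiv.Perm (Fin n) | Indecomposable p.2 ∧ inversions p.2 = k} ⊆
        ⋃ n ∈ Set.Iic (k + 1), Set.range (Sigma.mk n) := by
      rintro ⟨n, π⟩ ⟨h1, h2⟩
      have hn := key π h1
      have h2' : inversions π = k := h2
      simp only [Set.mem_iUnion, Set.mem_Iic]
      exact ⟨n, by omega, ⟨π, rfl⟩⟩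
    exact Set.Finite.subset (Set.Finite.biUnion (Set.finite_Iic (k + 1))
      (fun n _ => Set.finite_range _)) hsub
end

section
/- The inversion table of a permutation π is weakly decreasing if and only if π avoids the pattern 132. -/
/-- The inversion table of a permutation is weakly decreasing if and only if the
permutation avoids the pattern 132. -/
theorem invTable_antitone_iff_avoids132 (n : ℕ) (π : Equiv.Perm (Fin n)) :
    (∀ i j : Fin n, i ≤ j → invTable π j ≤ invTable π i) ↔ Avoids132 π := by
  constructor
  · rintro h ⟨i, j, k, hij, hjk, hik, hkj⟩
    set S := Finset.univ.filter (fun m : Fin n => m < j ∧ π m < π k) with hS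
    have hne : S.Nonempty := ⟨i, by simp [hS, hij, hik]⟩
    set i' := S.max' hne with hi'
    have hmem : i' ∈ S := S.max'_mem hne
    simp only [hS, Finset.mem_filter, Finset.mem_univ, true_and] at hmem
    obtain ⟨hi'j, hi'k⟩ := hmem
    have hsub : (Finset.univ.filter fun t : Fin n => i' < t ∧ π t < π i') ⊂
        (Finset.univ.filter fun t : Fin n => j < t ∧ π t < π j) := by
      constructor
      · intro t ht
        simp only [Finset.mem_filter, Finset.mem_univ, true_and] at ht ⊢
        obtain ⟨ht1, ht2⟩ := ht
        have htk : π t < π k := ht2.trans hi'k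
        have htj : j < t := by
          rcases lt_trichotomy t j with h1 | h1 | h1
          · exact absurd (S.le_max' t (by simp [hS, h1, htk])) (not_le.mpr ht1)
          · subst h1
            exact absurd ht2 (not_lt.mpr ((hi'k.trans hkj).le))
          · exact h1
        exact ⟨htj, htk.trans hkj⟩
      · intro hsub'
        have hk := hsub' (by simp [hjk, hkj] : k ∈ _)
        simp only [Finset.mem_filter, Finset.mem_univ, true_and] at hk
        exact absurd hk.2 (not_lt.mpr hi'k.le)
    exact absurd (h i' j hi'j.le) (not_le.mpr (Finset.card_lt_card hsub))
  · intro hav i j hij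
    apply Finset.card_le_card
    intro t ht
    simp only [Finset.mem_filter, Finset.mem_univ, true_and] at ht ⊢
    obtain ⟨ht1, ht2⟩ := ht
    refine ⟨hij.trans_lt ht1, ?_⟩
    rcases eq_or_lt_of_le hij with rfl | hij'
    · exact ht2
    · by_contra hc
      push_neg at hc
      have hne : π i ≠ π t := fun he => (hij'.trans ht1).ne (π.injective he)
      exact hav ⟨i, j, t, hij', ht1, lt_of_le_of_ne hc hne, ht2⟩
end

section
/- For every k ≥ 0, the number of indecomposable permutations with exactly k inversions that avoid the pattern 132 equals the number of partitions of k. -/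
/-!
The inversion table (Lehmer code) `c = invTable π` identifies the permutations of `Fin n` with the
sequences satisfying `c i + i < n`. Under this identification the number of inversions is `∑ c i`,
avoiding 132 means that `c` is weakly decreasing, and indecomposability means that every cut
`0 < j < n` is straddled by some `i < j` with `j ≤ c i + i`. A weakly decreasing code is a
partition `λ` of `k` padded with zeros, and for such a code indecomposability fixes the padding:
`n = 1 + max (λ i + i)` over `0 ≤ i ≤ ℓ(λ)`, with `λ ℓ(λ) = 0`.
-/

open Finset

section LehmerCode

variable {n : ℕ}

lemma card_filter_perm_val_lt (π : Equiv.Perm (Fin n)) (m : ℕ) :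
    #{j | (π j : ℕ) < m} = min n m := by
  rw [← Fin.card_filter_val_lt]
  exact card_equiv π (by simp)

lemma invTable_add_lt (π : Equiv.Perm (Fin n)) (i : Fin n) : invTable π i + i < n := by
  have : invTable π i ≤ #(Ioi i) := card_le_card fun j hj => by simp_all
  have := i.isLt
  rw [Fin.card_Ioi] at *
  omega

lemma val_le_invTable_add (π : Equiv.Perm (Fin n)) (i : Fin n) :
    (π i : ℕ) ≤ invTable π i + i := by
  have hsub : ({j | (π j : ℕ) < π i} : Finset _) ⊆
      ({j | i < j ∧ π j < π i} : Finset _) ∪ Iio i := by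
    intro j hj
    simp only [mem_filter, mem_univ, true_and, mem_union, mem_Iio] at hj ⊢
    rcases lt_trichotomy i j with h | rfl | h
    · exact .inl ⟨h, hj⟩
    · omega
    · exact .inr h
  have := (card_le_card hsub).trans (card_union_le _ _)
  rwa [card_filter_perm_val_lt, Fin.card_Iio, min_eq_right (π i).isLt.le] at this

lemma inversions_eq_sum_invTable (π : Equiv.Perm (Fin n)) :
    inversions π = ∑ i, invTable π i := by
  simp only [inversions, invTable, card_filter, Fintype.sum_prod_type]

def permCons (v : Fin (n + 1)) (σ : Equiv.Perm (Fin n)) : Equiv.Perm (Fin (n + 1)) :=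
  (finSuccEquiv n).trans ((Equiv.optionCongr σ).trans (finSuccEquiv' v).symm)

@[simp] lemma permCons_zero (v : Fin (n + 1)) (σ : Equiv.Perm (Fin n)) : permCons v σ 0 = v := by
  simp [permCons]

@[simp] lemma permCons_succ (v : Fin (n + 1)) (σ : Equiv.Perm (Fin n)) (i : Fin n) :
    permCons v σ i.succ = v.succAbove (σ i) := by
  simp [permCons]

lemma invTable_permCons_zero (v : Fin (n + 1)) (σ : Equiv.Perm (Fin n)) :
    invTable (permCons v σ) 0 = v := by
  rw [invTable, Fin.card_filter_univ_succ']
  simp only [lt_self_iff_false, false_and, if_false, zero_add, Fin.succ_pos, true_and,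
    permCons_succ, permCons_zero, Fin.succAbove_lt_iff_castSucc_lt]
  simp only [Fin.lt_def, Fin.val_castSucc, card_filter_perm_val_lt]
  omega

lemma invTable_permCons_succ (v : Fin (n + 1)) (σ : Equiv.Perm (Fin n)) (i : Fin n) :
    invTable (permCons v σ) i.succ = invTable σ i := by
  rw [invTable, Fin.card_filter_univ_succ']
  simp [invTable]

lemma exists_eq_permCons (π : Equiv.Perm (Fin (n + 1))) : ∃ σ, π = permCons (π 0) σ := by
  have hne (x : Fin n) : π x.succ ≠ π 0 := π.injective.ne (Fin.succ_ne_zero x)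
  choose f hf using fun x => Fin.exists_succAbove_eq (hne x)
  have hf_inj : Function.Injective f := fun a b hab =>
    Fin.succ_injective n (π.injective (by rw [← hf a, ← hf b, hab]))
  refine ⟨Equiv.ofBijective f hf_inj.bijective_of_finite, Equiv.ext fun j => ?_⟩
  cases j using Fin.cases <;> simp [hf]

lemma invTable_injective :
    Function.Injective (invTable : Equiv.Perm (Fin n) → Fin n → ℕ) := by
  induction n with
  | zero => exact fun π σ _ => Subsingleton.elim π σ
  | succ n ih =>
    intro π σ h
    obtain ⟨π', hπ⟩ := exists_eq_permCons π
    obtain ⟨σ', hσ⟩ := exists_eq_permCons σ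
    have h0 : π 0 = σ 0 := by
      have := congrFun h 0
      rw [hπ, hσ, invTable_permCons_zero, invTable_permCons_zero] at this
      exact Fin.ext this
    have h' : π' = σ' := ih <| funext fun i => by
      have := congrFun h i.succ
      rwa [hπ, hσ, invTable_permCons_succ, invTable_permCons_succ] at this
    rw [hπ, hσ, h0, h']

lemma exists_invTable_eq (c : Fin n → ℕ) (hc : ∀ i, c i + i < n) :
    ∃ π, invTable π = c := by
  induction n with
  | zero => exact ⟨1, funext fun i => i.elim0⟩
  | succ n ih =>
    have hc' (i : Fin n) : c i.succ + i < n := by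
      have := hc i.succ
      rw [Fin.val_succ] at this
      omega
    obtain ⟨σ, hσ⟩ := ih (fun i => c i.succ) hc'
    refine ⟨permCons ⟨c 0, by simpa using hc 0⟩ σ, funext fun i => ?_⟩
    cases i using Fin.cases with
    | zero => rw [invTable_permCons_zero]
    | succ i => rw [invTable_permCons_succ, hσ]

noncomputable def lehmerCode : Equiv.Perm (Fin n) ≃ {c : Fin n → ℕ // ∀ i, c i + i < n} :=
  Equiv.ofBijective (fun π => ⟨invTable π, invTable_add_lt π⟩)
    ⟨fun _ _ h => invTable_injective (congrArg Subtype.val h),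
      fun c => (exists_invTable_eq c.1 c.2).imp fun _ hπ => Subtype.ext hπ⟩

@[simp] lemma invTable_lehmerCode_symm (c : {c : Fin n → ℕ // ∀ i, c i + i < n}) :
    invTable (lehmerCode.symm c) = c.1 :=
  congrArg Subtype.val (lehmerCode.apply_symm_apply c)

lemma sigma_mk_eq_of_invTable_eq {m : ℕ} {π : Equiv.Perm (Fin m)} {σ : Equiv.Perm (Fin n)}
    (h : m = n) (hc : ∀ i : Fin m, invTable π i = invTable σ (Fin.cast h i)) :
    (⟨m, π⟩ : Σ l, Equiv.Perm (Fin l)) = ⟨n, σ⟩ := by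
  subst h
  exact congrArg _ (invTable_injective (funext hc))

end LehmerCode

section Patterns

variable {n : ℕ} {π : Equiv.Perm (Fin n)}

lemma antitone_invTable_of_avoids132 (h : Avoids132 π) : Antitone (invTable π) := by
  intro i j hij
  rcases hij.eq_or_lt with rfl | hij
  · rfl
  refine card_le_card fun m hm => ?_
  simp only [mem_filter, mem_univ, true_and] at hm ⊢
  refine ⟨hij.trans hm.1, not_le.mp fun him => h ⟨i, j, m, hij, hm.1, ?_, hm.2⟩⟩
  exact him.lt_of_ne (π.injective.ne (hij.trans hm.1).ne)

/-- Under `hgap`, every inversion `(i, m)` gives an inversion `(j, m)`, and `(j, k)` is an extra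
one. -/
lemma invTable_lt_invTable_of_pattern132 {i j k : Fin n} (hij : i < j) (hjk : j < k)
    (hik : π i < π k) (hkj : π k < π j) (hgap : ∀ m, i < m → m < j → π k < π m) :
    invTable π i < invTable π j := by
  refine card_lt_card ((ssubset_iff_of_subset fun m hm => ?_).mpr ⟨k, ?_, ?_⟩)
  · simp only [mem_filter, mem_univ, true_and] at hm ⊢
    obtain ⟨him, hmi⟩ := hm
    have hjm : j < m := by
      rcases lt_trichotomy m j with hmj | rfl | hjm
      · exact absurd ((hgap m him hmj).trans (hmi.trans hik)) (lt_irrefl _)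
      · exact absurd (hmi.trans (hik.trans hkj)) (lt_irrefl _)
      · exact hjm
    exact ⟨hjm, hmi.trans (hik.trans hkj)⟩
  · simp [hjk, hkj]
  · simp [hik.le.not_gt]

theorem avoids132_iff_antitone_invTable : Avoids132 π ↔ Antitone (invTable π) := by
  refine ⟨antitone_invTable_of_avoids132, fun hanti ⟨i, j, k, hij, hjk, hik, hkj⟩ => ?_⟩
  -- move `i` to the last position before `j` whose value is below `π k`
  obtain ⟨l, hl, hmax⟩ := ({m | m < j ∧ π m < π k} : Finset _).exists_max_image id
    ⟨i, by simp [hij, hik]⟩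
  simp only [mem_filter, mem_univ, true_and, id] at hl hmax
  have hgap (m) (hlm : l < m) (hmj : m < j) : π k < π m := by
    refine lt_of_le_of_ne (not_lt.mp fun hmk => (hmax m ⟨hmj, hmk⟩).not_gt hlm) ?_
    exact π.injective.ne (hmj.trans hjk).ne'
  exact (hanti hl.1.le).not_gt (invTable_lt_invTable_of_pattern132 hl.1 hjk hl.2 hkj hgap)

theorem decomposable_iff_invTable : Decomposable π ↔
    ∃ j : ℕ, 0 < j ∧ j < n ∧ ∀ i : Fin n, (i : ℕ) < j → invTable π i + i < j := by
  constructor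
  · rintro ⟨j, hj0, hjn, hmaps⟩
    refine ⟨j, hj0, hjn, fun i hi => ?_⟩
    set J : Finset (Fin n) := {l | (l : ℕ) < j} with hJ
    have hJ_eq : J = ({l | (π l : ℕ) < j} : Finset (Fin n)) := by
      refine eq_of_subset_of_card_le (fun l hl => ?_) ?_
      · simp only [hJ, mem_filter, mem_univ, true_and] at hl ⊢
        exact hmaps l hl
      · rw [card_filter_perm_val_lt, hJ, Fin.card_filter_val_lt]
    have hsub : ({l | i < l ∧ π l < π i} : Finset _) ⊆ J \ Iic i := fun l hl => by
      simp only [mem_filter, mem_univ, true_and] at hl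
      have : l ∈ J := hJ_eq ▸ by simpa using (Fin.lt_def.mp hl.2).trans (hmaps i hi)
      simpa [this] using hl.1
    have hIic : Iic i ⊆ J := fun l hl => by
      simpa [hJ] using (Fin.le_def.mp (mem_Iic.mp hl)).trans_lt hi
    have := card_le_card hsub
    rw [card_sdiff_of_subset hIic, hJ, Fin.card_filter_val_lt, Fin.card_Iic] at this
    unfold invTable
    omega
  · rintro ⟨j, hj0, hjn, hcode⟩
    exact ⟨j, hj0, hjn, fun i hi => (val_le_invTable_add π i).trans_lt (hcode i hi)⟩

def IndecomposableCode {n : ℕ} (c : Fin n → ℕ) : Prop :=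
  0 < n ∧ ∀ j : ℕ, 0 < j → j < n → ∃ i : Fin n, (i : ℕ) < j ∧ j ≤ c i + i

theorem indecomposable_iff_invTable {n : ℕ} (π : Equiv.Perm (Fin n)) :
    Indecomposable π ↔ IndecomposableCode (invTable π) := by
  simp only [Indecomposable, IndecomposableCode, decomposable_iff_invTable]
  push Not
  rfl

end Patterns

section Lists

lemma List.sum_filter_ne_zero (X : List ℕ) : (X.filter (· ≠ 0)).sum = X.sum := by
  induction X with
  | nil => rfl
  | cons a X ih =>
    rw [List.filter_cons]
    split <;> simp_all

lemma List.getD_filter_ne_zero_of_sortedGE {X : List ℕ} (hX : X.SortedGE) (i : ℕ) :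
    (X.filter (· ≠ 0)).getD i 0 = X.getD i 0 := by
  rw [List.sortedGE_iff_pairwise] at hX
  induction X generalizing i with
  | nil => rfl
  | cons a X ih =>
    obtain ⟨ha, hX⟩ := List.pairwise_cons.mp hX
    by_cases ha0 : a = 0
    · have hzero : ∀ x ∈ a :: X, x = 0 := by grind
      rw [List.filter_eq_nil_iff.mpr (by simpa using hzero), List.getD_nil]
      rcases lt_or_ge i (a :: X).length with hi | hi
      · rw [List.getD_eq_getElem _ _ hi, hzero _ (List.getElem_mem hi)]
      · rw [List.getD_eq_default _ _ hi]
    · rw [List.filter_cons_of_pos (by simpa using ha0)]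
      cases i with
      | zero => rfl
      | succ i => exact ih hX i

lemma List.ofFn_getD_eq_append {n : ℕ} (L : List ℕ) (h : L.length ≤ n) :
    List.ofFn (fun i : Fin n => L.getD i 0) = L ++ List.replicate (n - L.length) 0 := by
  refine List.ext_getElem (by simp; omega) fun i h1 h2 => ?_
  grind

end Lists

section Codes

def codeSize (L : List ℕ) : ℕ :=
  (range (L.length + 1)).sup fun i => L.getD i 0 + i + 1

lemma getD_add_lt_codeSize (L : List ℕ) {i : ℕ} (hi : i < codeSize L) :
    L.getD i 0 + i < codeSize L := by
  rcases lt_or_ge i (L.length + 1) with hl | hl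
  · exact le_sup (f := fun i => L.getD i 0 + i + 1) (mem_range.mpr hl)
  · rwa [List.getD_eq_default _ _ (by omega), zero_add]

lemma length_lt_codeSize (L : List ℕ) : L.length < codeSize L := by
  have := le_sup (f := fun i => L.getD i 0 + i + 1) (self_mem_range_succ L.length)
  rw [List.getD_eq_default _ _ le_rfl] at this
  unfold codeSize
  omega

lemma indecomposableCode_getD {L : List ℕ} (hL : ∀ x ∈ L, 0 < x) :
    IndecomposableCode fun i : Fin (codeSize L) => L.getD i 0 := by
  refine ⟨(L.length.zero_le.trans_lt (length_lt_codeSize L)), fun j hj0 hj => ?_⟩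
  obtain ⟨l, hl, hmax⟩ := exists_mem_eq_sup (range (L.length + 1)) nonempty_range_add_one
    fun i => L.getD i 0 + i + 1
  rw [mem_range] at hl
  rw [← codeSize] at hmax
  by_cases hlj : l < j
  · exact ⟨⟨l, by omega⟩, hlj, by simp only; omega⟩
  · have hjL : j - 1 < L.length := by omega
    have := hL _ (List.getElem_mem hjL)
    refine ⟨⟨j - 1, by omega⟩, by simp only; omega, ?_⟩
    simp only [List.getD_eq_getElem _ _ hjL]
    omega

lemma codeSize_filter_ofFn {n : ℕ} {c : Fin n → ℕ} (hvalid : ∀ i, c i + i < n)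
    (hanti : Antitone c) (hind : IndecomposableCode c) :
    codeSize ((List.ofFn c).filter (· ≠ 0)) = n := by
  set L := (List.ofFn c).filter (· ≠ 0)
  have hL (i : ℕ) : L.getD i 0 = (List.ofFn c).getD i 0 :=
    List.getD_filter_ne_zero_of_sortedGE (List.sortedGE_ofFn_iff.mpr hanti) i
  have hLc (i : Fin n) : L.getD i 0 = c i := by
    rw [hL, List.getD_eq_getElem _ _ (by simp), List.getElem_ofFn]
  have hpos (i : ℕ) (hi : i < L.length) : L.getD i 0 ≠ 0 := by
    rw [List.getD_eq_getElem _ _ hi]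
    simpa using (List.mem_filter.mp (List.getElem_mem hi)).2
  obtain ⟨hn, hind⟩ := hind
  have hlen : L.length < n := by
    by_contra! h
    have := hvalid ⟨n - 1, by omega⟩
    exact hpos (n - 1) (by omega) (by rw [hLc ⟨n - 1, by omega⟩]; simp only at this; omega)
  refine le_antisymm (Finset.sup_le fun i hi => ?_) ?_
  · have hi : i < n := by rw [mem_range] at hi; omega
    have := hvalid ⟨i, hi⟩
    rw [hLc ⟨i, hi⟩]
    simp only at this
    omega
  · rcases (Nat.succ_le_of_lt hn).eq_or_lt with rfl | hn1
    · exact Nat.succ_le_of_lt (L.length.zero_le.trans_lt (length_lt_codeSize L))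
    obtain ⟨i, hi, hci⟩ := hind (n - 1) (by omega) (by omega)
    have hiL : (i : ℕ) < L.length := by
      by_contra! h
      rw [← hLc i, List.getD_eq_default _ _ h] at hci
      omega
    have := le_sup (f := fun i => L.getD i 0 + i + 1)
      (mem_range.mpr (by omega : (i : ℕ) < L.length + 1))
    rw [hLc i] at this
    unfold codeSize
    omega

end Codes

namespace Nat.Partition

variable {k n : ℕ}

def sortedParts (P : Nat.Partition k) : List ℕ := P.parts.sort (· ≥ ·)

lemma sortedGE_sortedParts (P : Nat.Partition k) : P.sortedParts.SortedGE :=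
  List.sortedGE_iff_pairwise.mpr (Multiset.pairwise_sort _ _)

@[simp] lemma coe_sortedParts (P : Nat.Partition k) : (P.sortedParts : Multiset ℕ) = P.parts :=
  Multiset.sort_eq _ _

def code (P : Nat.Partition k) : Fin (codeSize P.sortedParts) → ℕ :=
  fun i => P.sortedParts.getD i 0

lemma pos_of_mem_sortedParts (P : Nat.Partition k) {x : ℕ} (hx : x ∈ P.sortedParts) : 0 < x :=
  P.parts_pos (by rwa [← P.coe_sortedParts, Multiset.mem_coe])

lemma ofFn_code (P : Nat.Partition k) : List.ofFn P.code =
    P.sortedParts ++ List.replicate (codeSize P.sortedParts - P.sortedParts.length) 0 :=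
  List.ofFn_getD_eq_append _ (length_lt_codeSize _).le

lemma code_add_lt (P : Nat.Partition k) (i : Fin (codeSize P.sortedParts)) :
    P.code i + i < codeSize P.sortedParts :=
  getD_add_lt_codeSize _ i.isLt

lemma antitone_code (P : Nat.Partition k) : Antitone P.code := by
  rw [← List.sortedGE_ofFn_iff, ofFn_code, List.sortedGE_iff_pairwise, List.pairwise_append]
  refine ⟨List.sortedGE_iff_pairwise.mp P.sortedGE_sortedParts, ?_, ?_⟩
  · exact List.pairwise_replicate.mpr (.inr le_rfl)
  · intro a _ b hb
    simp [List.eq_of_mem_replicate hb]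

lemma indecomposableCode_code (P : Nat.Partition k) : IndecomposableCode P.code :=
  indecomposableCode_getD fun _ => P.pos_of_mem_sortedParts

lemma sum_code (P : Nat.Partition k) : ∑ i, P.code i = k := by
  rw [← List.sum_ofFn, ofFn_code, List.sum_append, List.sum_replicate, smul_zero, add_zero,
    ← Multiset.sum_coe, coe_sortedParts, P.parts_sum]

def ofCode (c : Fin n → ℕ) (hc : ∑ i, c i = k) : Nat.Partition k where
  parts := ((List.ofFn c).filter (· ≠ 0) : List ℕ)
  parts_pos hi := Nat.pos_of_ne_zero (by simpa using (List.mem_filter.mp hi).2)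
  parts_sum := by rw [Multiset.sum_coe, List.sum_filter_ne_zero, List.sum_ofFn, hc]

lemma ofCode_code (P : Nat.Partition k) : ofCode P.code P.sum_code = P := by
  ext1
  have hpos : ∀ x ∈ P.sortedParts, decide (x ≠ 0) = true := fun x hx =>
    decide_eq_true (P.pos_of_mem_sortedParts hx).ne'
  simp only [ofCode, ofFn_code, List.filter_append, List.filter_eq_self.mpr hpos]
  simp

lemma sortedParts_ofCode {c : Fin n → ℕ} (hc : ∑ i, c i = k) (hanti : Antitone c) :
    (ofCode c hc).sortedParts = (List.ofFn c).filter (· ≠ 0) :=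
  List.Perm.eq_of_sortedGE (sortedGE_sortedParts _)
    (List.sortedGE_iff_pairwise.mpr
      ((List.sortedGE_iff_pairwise.mp (List.sortedGE_ofFn_iff.mpr hanti)).filter _))
    (Multiset.coe_eq_coe.mp (coe_sortedParts _))

lemma getD_sortedParts_ofCode {c : Fin n → ℕ} (hc : ∑ i, c i = k) (hanti : Antitone c)
    {m : ℕ} (hm : m < n) :
    (ofCode c hc).sortedParts.getD m 0 = c ⟨m, hm⟩ := by
  rw [sortedParts_ofCode hc hanti,
    List.getD_filter_ne_zero_of_sortedGE (List.sortedGE_ofFn_iff.mpr hanti),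
    List.getD_eq_getElem _ _ (by simpa using hm), List.getElem_ofFn]

lemma codeSize_sortedParts_ofCode {c : Fin n → ℕ} (hc : ∑ i, c i = k)
    (hvalid : ∀ i, c i + i < n) (hanti : Antitone c) (hind : IndecomposableCode c) :
    codeSize (ofCode c hc).sortedParts = n := by
  rw [sortedParts_ofCode hc hanti]
  exact codeSize_filter_ofFn hvalid hanti hind

end Nat.Partition

noncomputable def indecomposableAvoids132EquivPartition (k : ℕ) :
    {p : Σ n : ℕ, Equiv.Perm (Fin n) //
        Indecomposable p.2 ∧ inversions p.2 = k ∧ Avoids132 p.2} ≃ Nat.Partition k where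
  toFun p := .ofCode (invTable p.1.2) (inversions_eq_sum_invTable p.1.2 ▸ p.2.2.1)
  invFun P := ⟨⟨codeSize P.sortedParts, lehmerCode.symm ⟨P.code, P.code_add_lt⟩⟩,
    by rw [indecomposable_iff_invTable, invTable_lehmerCode_symm]; exact P.indecomposableCode_code,
    by rw [inversions_eq_sum_invTable, invTable_lehmerCode_symm]; exact P.sum_code,
    by rw [avoids132_iff_antitone_invTable, invTable_lehmerCode_symm]; exact P.antitone_code⟩
  left_inv := by
    rintro ⟨⟨n, π⟩, hind, -, havoid⟩
    rw [indecomposable_iff_invTable] at hind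
    rw [avoids132_iff_antitone_invTable] at havoid
    refine Subtype.ext (sigma_mk_eq_of_invTable_eq
      (Nat.Partition.codeSize_sortedParts_ofCode _ (invTable_add_lt π) havoid hind) fun i => ?_)
    rw [invTable_lehmerCode_symm]
    exact Nat.Partition.getD_sortedParts_ofCode _ havoid _
  right_inv P := by
    convert P.ofCode_code
    exact invTable_lehmerCode_symm _

/-- The number of indecomposable permutations with exactly `k` inversions avoiding
the pattern 132 equals the number of partitions of `k`. -/
theorem card_indecomposable_avoids132_eq_partitions (k : ℕ) :
    Nat.card {p : Σ n : ℕ, Equiv.Perm (Fin n) //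
        Indecomposable p.2 ∧ inversions p.2 = k ∧ Avoids132 p.2}
      = Nat.card (Nat.Partition k) :=
  Nat.card_congr (indecomposableAvoids132EquivPartition k)
end

section
/- For every k ≥ 0, the unique indecomposable permutation with exactly k inversions avoiding both 231 and 321 is the permutation (k+1) 1 2 … k; in particular there is exactly one such permutation. -/
lemma card_val_filter (n : ℕ) (P : ℕ → Prop) [DecidablePred P] :
    (Finset.univ.filter fun v : Fin n => P v.val).card = ((Finset.range n).filter P).card := by
  have h1 : (((Finset.univ : Finset (Fin n)).map Fin.valEmbedding).filter P).card
      = (Finset.univ.filter fun v : Fin n => P v.val).card := by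
    rw [Finset.filter_map, Finset.card_map]; rfl
  rw [← h1, Fin.map_valEmbedding_univ, Nat.Iio_eq_range]

lemma card_val_lt (n m : ℕ) (h : m ≤ n) :
    (Finset.univ.filter fun v : Fin n => v.val < m).card = m := by
  rw [card_val_filter n (fun x => x < m)]
  have : (Finset.range n).filter (fun x => x < m) = Finset.range m := by
    ext x; simp only [Finset.mem_filter, Finset.mem_range]; omega
  rw [this, Finset.card_range]

lemma card_val_Ioo (n a b : ℕ) (h : b ≤ n) :
    (Finset.univ.filter fun v : Fin n => a < v.val ∧ v.val < b).card = b - a - 1 := by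
  rw [card_val_filter n (fun x => a < x ∧ x < b)]
  have : (Finset.range n).filter (fun x => a < x ∧ x < b) = Finset.Ioo a b := by
    ext x
    simp only [Finset.mem_filter, Finset.mem_range, Finset.mem_Ioo]
    omega
  rw [this, Nat.card_Ioo]

lemma card_perm_filter {n : ℕ} (π : Equiv.Perm (Fin n)) (P : Fin n → Prop) [DecidablePred P] :
    (Finset.univ.filter fun s => P (π s)).card = (Finset.univ.filter P).card := by
  apply Finset.card_bij' (fun s _ => π s) (fun v _ => π.symm v) <;> simp

lemma card_val_pos (n : ℕ) :
    (Finset.univ.filter fun v : Fin n => 0 < v.val).card = n - 1 := by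
  rw [card_val_filter n (fun x => 0 < x)]
  have : (Finset.range n).filter (fun x => 0 < x) = Finset.Ioo 0 n := by
    ext x; simp only [Finset.mem_filter, Finset.mem_range, Finset.mem_Ioo]; omega
  rw [this, Nat.card_Ioo]
  omega

lemma card_val_eq_zero (n : ℕ) (hn : 0 < n) :
    (Finset.univ.filter fun v : Fin n => v.val = 0).card = 1 := by
  rw [card_val_filter n (fun x => x = 0)]
  have : (Finset.range n).filter (fun x => x = 0) = {0} := by
    ext x; simp only [Finset.mem_filter, Finset.mem_range, Finset.mem_singleton]; omega
  rw [this, Finset.card_singleton]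

lemma inv_count {n : ℕ} (hn : 0 < n) (π : Equiv.Perm (Fin n))
    (hform : ∀ i : Fin n, (π i : ℕ) = if (i : ℕ) = 0 then n - 1 else (i : ℕ) - 1) :
    inversions π = n - 1 := by
  unfold inversions
  have hfil : (Finset.univ.filter fun p : Fin n × Fin n => p.1 < p.2 ∧ π p.2 < π p.1)
      = Finset.univ.filter fun p : Fin n × Fin n => (p.1 : ℕ) = 0 ∧ 0 < (p.2 : ℕ) := by
    ext p
    simp only [Finset.mem_filter, Finset.mem_univ, true_and, Fin.lt_def]
    have h1 := hform p.1; have h2 := hform p.2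
    have b1 : (p.1 : ℕ) < n := p.1.isLt
    have b2 : (p.2 : ℕ) < n := p.2.isLt
    rw [h1, h2]
    split_ifs <;> omega
  rw [hfil, ← Finset.univ_product_univ,
    Finset.filter_product (fun a : Fin n => (a : ℕ) = 0) (fun b : Fin n => 0 < (b : ℕ))]
  rw [Finset.card_product, card_val_eq_zero n hn, card_val_pos, one_mul]

theorem fwd (k n : ℕ) (π : Equiv.Perm (Fin n))
    (hn : 0 < n) (hnd : ¬ Decomposable π) (hk : inversions π = k)
    (h231 : Avoids231 π) (h321 : Avoids321 π) :
    (n = k + 1 ∧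
        ∀ i : Fin n, (π i : ℕ) = if (i : ℕ) = 0 then k else (i : ℕ) - 1) := by
  set z : Fin n := ⟨0, hn⟩ with hz
  have hz0 : (z : ℕ) = 0 := rfl
  have hform : ∀ i : Fin n, (π i : ℕ) = if (i : ℕ) = 0 then n - 1 else (i : ℕ) - 1 := by
    -- first: (π z).val = n - 1
    have hpi0 : (π z : ℕ) = n - 1 := by
      by_contra hne
      set m := (π z : ℕ) with hm
      have hmlt : m < n - 1 := by
        have := (π z).isLt; omega
      apply hnd
      refine ⟨m + 1, by omega, by omega, ?_⟩
      by_contra hdec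
      push_neg at hdec
      obtain ⟨i, hi, hpi⟩ := hdec
      have hi0 : 0 < (i : ℕ) := by
        rcases Nat.eq_zero_or_pos (i : ℕ) with h0 | h0
        · exfalso
          have : i = z := Fin.ext (by omega)
          rw [this] at hpi; omega
        · exact h0
      -- every s with (π s).val < m satisfies 0 < s < i
      have hS : ∀ s : Fin n, (π s : ℕ) < m → 0 < (s : ℕ) ∧ (s : ℕ) < (i : ℕ) := by
        intro s hs
        have hs0 : 0 < (s : ℕ) := by
          rcases Nat.eq_zero_or_pos (s : ℕ) with h0 | h0
          · exfalso
            have : s = z := Fin.ext (by omega)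
            rw [this] at hs; omega
          · exact h0
        refine ⟨hs0, ?_⟩
        rcases lt_trichotomy (i : ℕ) (s : ℕ) with h | h | h
        · exfalso
          exact h231 ⟨z, i, s, by rw [Fin.lt_def]; omega,
            by rw [Fin.lt_def]; omega, by rw [Fin.lt_def]; omega,
            by rw [Fin.lt_def]; omega⟩
        · exfalso
          have : s = i := Fin.ext h.symm
          rw [this] at hs; omega
        · exact h
      have hcard1 : (Finset.univ.filter fun s : Fin n => (π s : ℕ) < m).card = m := by
        rw [card_perm_filter π (fun v => (v : ℕ) < m), card_val_lt]
        omega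
      have hsub : (Finset.univ.filter fun s : Fin n => (π s : ℕ) < m)
          ⊆ Finset.univ.filter fun s : Fin n => 0 < (s : ℕ) ∧ (s : ℕ) < (i : ℕ) := by
        intro s hsmem
        simp only [Finset.mem_filter, Finset.mem_univ, true_and] at hsmem ⊢
        exact hS s hsmem
      have hcard2 := Finset.card_le_card hsub
      rw [hcard1, card_val_Ioo n 0 (i : ℕ) (le_of_lt i.isLt)] at hcard2
      omega
    -- monotone on positive positions
    have hmono : ∀ i j : Fin n, 0 < (i : ℕ) → (i : ℕ) < (j : ℕ) → (π i : ℕ) < (π j : ℕ) := by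
      intro i j hi hij
      by_contra hle
      push_neg at hle
      have hne : π j ≠ π i := fun h => by
        have := π.injective h
        rw [this] at hij; omega
      have hlt : (π j : ℕ) < (π i : ℕ) := lt_of_le_of_ne hle (fun h => hne (Fin.ext h))
      have hine : (π i : ℕ) < n - 1 := by
        have h1 : (π i : ℕ) ≤ n - 1 := by have := (π i).isLt; omega
        rcases lt_or_eq_of_le h1 with h | h
        · exact h
        · exfalso
          have : π i = π z := Fin.ext (by rw [h, hpi0])
          have := π.injective this
          rw [this] at hi; omega
      exact h321 ⟨z, i, j, by rw [Fin.lt_def]; omega,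
        by rw [Fin.lt_def]; omega, by rw [Fin.lt_def]; omega,
        by rw [Fin.lt_def]; omega⟩
    intro i
    by_cases hi0 : (i : ℕ) = 0
    · rw [if_pos hi0]
      have : i = z := Fin.ext (by simpa using hi0)
      rw [this, hpi0]
    · rw [if_neg hi0]
      have hi0' : 0 < (i : ℕ) := Nat.pos_of_ne_zero hi0
      have key : (Finset.univ.filter fun s : Fin n => (π s : ℕ) < (π i : ℕ))
          = Finset.univ.filter fun s : Fin n => 0 < (s : ℕ) ∧ (s : ℕ) < (i : ℕ) := by
        ext s
        simp only [Finset.mem_filter, Finset.mem_univ, true_and]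
        constructor
        · intro hs
          have hs0 : 0 < (s : ℕ) := by
            rcases Nat.eq_zero_or_pos (s : ℕ) with h0 | h0
            · exfalso
              have : s = z := Fin.ext (by simpa using h0)
              rw [this, hpi0] at hs
              have := (π i).isLt; omega
            · exact h0
          refine ⟨hs0, ?_⟩
          rcases lt_trichotomy (s : ℕ) (i : ℕ) with h | h | h
          · exact h
          · exfalso; have : s = i := Fin.ext h; rw [this] at hs; omega
          · exfalso; have := hmono i s hi0' h; omega
        · intro ⟨hs0, hsi⟩
          exact hmono s i hs0 hsi
      have c1 : (Finset.univ.filter fun s : Fin n => (π s : ℕ) < (π i : ℕ)).card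
          = (π i : ℕ) := by
        rw [card_perm_filter π (fun v => (v : ℕ) < (π i : ℕ)), card_val_lt]
        exact le_of_lt (π i).isLt
      rw [key] at c1
      rw [card_val_Ioo n 0 (i : ℕ) (le_of_lt i.isLt)] at c1
      omega
  have hinv : inversions π = n - 1 := inv_count hn π hform
  have hkn : n = k + 1 := by omega
  refine ⟨hkn, fun i => ?_⟩
  have := hform i
  rw [this]
  split_ifs <;> omega

theorem bwd (k n : ℕ) (π : Equiv.Perm (Fin n)) (hkn : n = k + 1)
    (hdef : ∀ i : Fin n, (π i : ℕ) = if (i : ℕ) = 0 then k else (i : ℕ) - 1) :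
    (Indecomposable π ∧ inversions π = k ∧ Avoids231 π ∧ Avoids321 π) := by
  have hn : 0 < n := by omega
  have hform : ∀ i : Fin n, (π i : ℕ) = if (i : ℕ) = 0 then n - 1 else (i : ℕ) - 1 := by
    intro i; rw [hdef i]; split_ifs <;> omega
  refine ⟨⟨hn, ?_⟩, ?_, ?_, ?_⟩
  · rintro ⟨j, hj0, hjn, hall⟩
    have := hall ⟨0, hn⟩ (by simpa using hj0)
    rw [hdef ⟨0, hn⟩] at this
    simp at this
    omega
  · rw [inv_count hn π hform]; omega
  · rintro ⟨i, j, l, hij, hjl, h1, h2⟩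
    rw [Fin.lt_def] at hij hjl h1 h2
    have d1 := hdef i; have d2 := hdef j; have d3 := hdef l
    have := i.isLt; have := j.isLt; have := l.isLt
    split_ifs at d1 d2 d3 <;> omega
  · rintro ⟨i, j, l, hij, hjl, h1, h2⟩
    rw [Fin.lt_def] at hij hjl h1 h2
    have d1 := hdef i; have d2 := hdef j; have d3 := hdef l
    have := i.isLt; have := j.isLt; have := l.isLt
    split_ifs at d1 d2 d3 <;> omega

/-- The unique indecomposable permutation with exactly `k` inversions avoiding
both 231 and 321 is `(k+1) 1 2 … k` (written 0-indexed as `π 0 = k` and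
`π i = i - 1` for `i > 0`). -/
theorem indecomposable_avoids231_avoids321_char (k n : ℕ) (π : Equiv.Perm (Fin n)) :
    (Indecomposable π ∧ inversions π = k ∧ Avoids231 π ∧ Avoids321 π) ↔
      (n = k + 1 ∧
        ∀ i : Fin n, (π i : ℕ) = if (i : ℕ) = 0 then k else (i : ℕ) - 1) := by
  constructor
  · rintro ⟨⟨hn, hnd⟩, hk, h231, h321⟩
    exact fwd k n π hn hnd hk h231 h321
  · rintro ⟨hkn, hdef⟩
    exact bwd k n π hkn hdef
end

section
/- In a 321-avoiding indecomposable permutation π on n ≥ 2 elements, every left-to-right maximum π_{i_j} satisfies π_{i_j} > i_j; moreover if π_{i_j} and π_{i_{j+1}} are consecutive left-to-right maxima then i_{j+1} ≤ π_{i_j}. -/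
/-- If every position below `i` maps below `v`, then `i ≤ v` (counting). -/
lemma aux_card_le {n : ℕ} (π : Equiv.Perm (Fin n)) (i v : Fin n)
    (h : ∀ m : Fin n, m < i → π m ≤ v) : (i : ℕ) ≤ (v : ℕ) + 1 := by
  have hsub : (Finset.Iio i).image π ⊆ Finset.Iic v := by
    intro x hx
    simp only [Finset.mem_image, Finset.mem_Iio] at hx
    obtain ⟨m, hm, rfl⟩ := hx
    simpa using h m hm
  have hcard := Finset.card_le_card hsub
  rw [Finset.card_image_of_injective _ π.injective] at hcard
  rw [Fin.card_Iio, Fin.card_Iic] at hcard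
  exact hcard

lemma aux_card_le' {n : ℕ} (π : Equiv.Perm (Fin n)) (i v : Fin n)
    (h : ∀ m : Fin n, m ≤ i → π m ≤ v) : (i : ℕ) ≤ (v : ℕ) := by
  have hsub : (Finset.Iic i).image π ⊆ Finset.Iic v := by
    intro x hx
    simp only [Finset.mem_image, Finset.mem_Iic] at hx
    obtain ⟨m, hm, rfl⟩ := hx
    simpa using h m hm
  have hcard := Finset.card_le_card hsub
  rw [Finset.card_image_of_injective _ π.injective] at hcard
  rw [Fin.card_Iic, Fin.card_Iic] at hcard
  omega

lemma aux_ltrmax_le {n : ℕ} (π : Equiv.Perm (Fin n)) (i : Fin n)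
    (h : LTRMax π i) : (i : ℕ) ≤ (π i : ℕ) := by
  refine aux_card_le' π i (π i) (fun m hm => ?_)
  rcases lt_or_eq_of_le hm with h' | h'
  · exact le_of_lt (h m h')
  · subst h'; exact le_refl _

/-- In a 321-avoiding indecomposable permutation on at least two elements, every
left-to-right maximum exceeds its position, and for consecutive left-to-right
maxima at positions `i < i'`, the position `i'` is at most the value `π i`
(all stated 0-indexed, which matches the 1-indexed claims). -/
theorem ltrmax_bounds_of_avoids321_indecomposable (n : ℕ) (hn : 2 ≤ n)
    (π : Equiv.Perm (Fin n)) (h1 : Avoids321 π) (h2 : Indecomposable π) :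
    (∀ i : Fin n, LTRMax π i → (i : ℕ) < (π i : ℕ)) ∧
    (∀ i i' : Fin n, LTRMax π i → LTRMax π i' → i < i' →
      (∀ m : Fin n, i < m → m < i' → ¬ LTRMax π m) → (i' : ℕ) ≤ (π i : ℕ)) := by
  obtain ⟨-, hnd⟩ := h2
  constructor
  · intro i hi
    have hle := aux_ltrmax_le π i hi
    rcases lt_or_eq_of_le hle with h | h
    · exact h
    exfalso
    apply hnd
    by_cases hcase : (i : ℕ) + 1 < n
    · refine ⟨(i : ℕ) + 1, Nat.succ_pos _, hcase, fun m hm => ?_⟩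
      rcases lt_or_eq_of_le (Nat.lt_succ_iff.mp hm) with h' | h'
      · have : m < i := by rwa [Fin.lt_def]
        have := hi m this
        rw [Fin.lt_def] at this
        omega
      · have : m = i := Fin.ext h'
        subst this
        omega
    · -- i = n - 1, so π i = i = n-1; use j = i
      have hin : (i : ℕ) + 1 = n := by omega
      refine ⟨(i : ℕ), by omega, by omega, fun m hm => ?_⟩
      have : m < i := by rwa [Fin.lt_def]
      have := hi m this
      rw [Fin.lt_def] at this
      omega
  · intro i i' hi hi' hlt hmax
    -- every m with i < m < i' has π m < π i
    have key : ∀ M : ℕ, ∀ m : Fin n, (m : ℕ) = M → i < m → m < i' → π m < π i := by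
      intro M
      induction M using Nat.strong_induction_on with
      | _ M ih =>
        intro m hmM him hmi'
        have hnot := hmax m him hmi'
        unfold LTRMax at hnot
        push_neg at hnot
        obtain ⟨p, hp, hple⟩ := hnot
        have hpm : π m < π p := by
          rcases lt_or_eq_of_le hple with h | h
          · exact h
          · exact absurd (π.injective h) (ne_of_gt hp)
        rcases lt_trichotomy p i with h | h | h
        · exact hpm.trans (hi p h)
        · subst h; exact hpm
        · have hpi' : p < i' := hp.trans hmi'
          have := ih (p : ℕ) (by subst hmM; exact hp) p rfl h hpi'
          exact hpm.trans this
    have hall : ∀ m : Fin n, m < i' → π m ≤ π i := by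
      intro m hm
      rcases lt_trichotomy m i with h | h | h
      · exact le_of_lt (hi m h)
      · subst h; exact le_refl _
      · exact le_of_lt (key (m : ℕ) m rfl h hm)
    have hle := aux_card_le π i' (π i) hall
    rcases lt_or_eq_of_le hle with h | h
    · omega
    exfalso
    apply hnd
    refine ⟨(i' : ℕ), ?_, i'.isLt, fun m hm => ?_⟩
    · have := Fin.lt_def.mp hlt; omega
    · have : m < i' := by rwa [Fin.lt_def]
      have := hall m this
      rw [Fin.le_def] at this
      omega
end

section
/- A permutation avoids both 132 and 123 if and only if every entry is greater than all but at most one of the entries following it. Equivalently, the inversion table b₁…b_n satisfies b_i ≥ n − i − 1 for all i. -/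
/-- A permutation avoids both 132 and 123 iff every entry is greater than all but
at most one of the entries following it; equivalently its inversion table `b`
satisfies `b_i ≥ n - i - 1` (1-indexed), i.e. `b i ≥ n - i - 2` 0-indexed. -/
theorem avoids132_avoids123_iff (n : ℕ) (π : Equiv.Perm (Fin n)) :
    ((Avoids132 π ∧ Avoids123 π) ↔
      ∀ i : Fin n,
        (Finset.univ.filter fun j : Fin n => i < j ∧ π i < π j).card ≤ 1) ∧
    ((Avoids132 π ∧ Avoids123 π) ↔
      ∀ i : Fin n, n - (i : ℕ) - 2 ≤ invTable π i) := by
  have key : (Avoids132 π ∧ Avoids123 π) ↔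
      ∀ i : Fin n,
        (Finset.univ.filter fun j : Fin n => i < j ∧ π i < π j).card ≤ 1 := by
    constructor
    · rintro ⟨h132, h123⟩ i
      by_contra h
      push_neg at h
      obtain ⟨j, hj, k, hk, hjk⟩ := Finset.one_lt_card.mp h
      simp only [Finset.mem_filter, Finset.mem_univ, true_and] at hj hk
      have hpne : π j ≠ π k := fun e => hjk (π.injective e)
      rcases lt_or_gt_of_ne hjk with h' | h'
      · rcases lt_or_gt_of_ne hpne with hp | hp
        · exact h123 ⟨i, j, k, hj.1, h', hj.2, hp⟩
        · exact h132 ⟨i, j, k, hj.1, h', hk.2, hp⟩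
      · rcases lt_or_gt_of_ne hpne with hp | hp
        · exact h132 ⟨i, k, j, hk.1, h', hj.2, hp⟩
        · exact h123 ⟨i, k, j, hk.1, h', hk.2, hp⟩
    · intro h
      constructor
      · rintro ⟨i, j, k, hij, hjk, h1, h2⟩
        have := h i
        have : 1 < (Finset.univ.filter fun j' : Fin n => i < j' ∧ π i < π j').card :=
          Finset.one_lt_card.mpr ⟨j, by simp [hij, h1.trans h2], k,
            by simp [hij.trans hjk, h1], ne_of_lt hjk⟩
        omega
      · rintro ⟨i, j, k, hij, hjk, h1, h2⟩
        have := h i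
        have : 1 < (Finset.univ.filter fun j' : Fin n => i < j' ∧ π i < π j').card :=
          Finset.one_lt_card.mpr ⟨j, by simp [hij, h1], k,
            by simp [hij.trans hjk, h1.trans h2], ne_of_lt hjk⟩
        omega
  refine ⟨key, key.trans (forall_congr' fun i => ?_)⟩
  have hsum : invTable π i +
      (Finset.univ.filter fun j : Fin n => i < j ∧ π i < π j).card = n - 1 - (i : ℕ) := by
    unfold invTable
    rw [← Finset.card_union_of_disjoint]
    · have : (Finset.univ.filter fun j : Fin n => i < j ∧ π j < π i) ∪
          (Finset.univ.filter fun j : Fin n => i < j ∧ π i < π j) =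
          Finset.univ.filter fun j : Fin n => i < j := by
        rw [← Finset.filter_or]
        apply Finset.filter_congr
        intro j _
        constructor
        · rintro (⟨h1, _⟩ | ⟨h1, _⟩) <;> exact h1
        · intro hij
          have : π j ≠ π i := fun e => (ne_of_gt hij) (π.injective e)
          rcases lt_or_gt_of_ne this with hp | hp
          · exact Or.inl ⟨hij, hp⟩
          · exact Or.inr ⟨hij, hp⟩
      rw [this]
      have : (Finset.univ.filter fun j : Fin n => i < j) = Finset.Ioi i := by
        ext j; simp
      rw [this, Fin.card_Ioi]
    · rw [Finset.disjoint_left]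
      rintro j hj hj'
      simp only [Finset.mem_filter, Finset.mem_univ, true_and] at hj hj'
      exact absurd (hj.2.trans hj'.2) (lt_irrefl _)
  have hi : (i : ℕ) < n := i.isLt
  omega
end

section
/- A partition ρ₁ ≥ ρ₂ ≥ … ≥ ρ_r > 0 is Gorenstein (all maximal chains of the corresponding order ideal in ℕ₊ × ℕ₊ have the same length) if and only if ρ_i + i is the same for all indices i with ρ_i ≠ ρ_{i+1} (setting ρ_{r+1} = 0). -/
/-- The order ideal of `ℕ₊ × ℕ₊` (under the componentwise order) associated with a
partition `ρ`: the pairs `(a, b)` with `1 ≤ b ≤ r` and `1 ≤ a ≤ ρ_b`. -/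
def partitionIdeal (ρ : List ℕ) : Set (ℕ × ℕ) :=
  {p | 1 ≤ p.2 ∧ p.2 ≤ ρ.length ∧ 1 ≤ p.1 ∧ p.1 ≤ ρ.getD (p.2 - 1) 0}

/-- A chain of the ideal, maximal among chains contained in the ideal. -/
def IsMaximalChain (ρ : List ℕ) (C : Finset (ℕ × ℕ)) : Prop :=
  ↑C ⊆ partitionIdeal ρ ∧ IsChain (· ≤ ·) (C : Set (ℕ × ℕ)) ∧
    ∀ C' : Finset (ℕ × ℕ), C ⊆ C' → ↑C' ⊆ partitionIdeal ρ →
      IsChain (· ≤ ·) (C' : Set (ℕ × ℕ)) → C' = C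

/-!
A chain of `ℕ₊ × ℕ₊` has at most one element of each rank `p.1 + p.2`, so a chain whose elements
lie below `t` has at most `t.1 + t.2 - 1` elements. A maximal chain of the ideal has a largest
element `t`, which must be a maximal element (a corner) of the ideal, and it is saturated: a
missing rank between two consecutive elements could be filled by a lattice point between them.
Hence the lengths of maximal chains are exactly the numbers `t.1 + t.2 - 1` for the corners
`t = (ρᵢ, i)` (the hook through `t`, saturated and topped by a corner, realises each of them), and
they all agree iff `ρᵢ + i` is constant over the corners.
-/

section Chain

variable {s : Set (ℕ × ℕ)} {C : Finset (ℕ × ℕ)}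

theorem IsChain.le_of_fst_add_snd_le (hs : IsChain (· ≤ ·) s) {p q : ℕ × ℕ} (hp : p ∈ s)
    (hq : q ∈ s) (h : p.1 + p.2 ≤ q.1 + q.2) : p ≤ q := by
  rcases eq_or_ne p q with rfl | hne
  · exact le_rfl
  rcases hs hp hq hne with hpq | ⟨h₁, h₂⟩
  · exact hpq
  · exact (Prod.ext (by omega) (by omega) : p = q).le

theorem IsChain.injOn_fst_add_snd (hs : IsChain (· ≤ ·) s) :
    Set.InjOn (fun p : ℕ × ℕ => p.1 + p.2) s := fun _ hp _ hq h =>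
  le_antisymm (hs.le_of_fst_add_snd_le hp hq h.le) (hs.le_of_fst_add_snd_le hq hp h.ge)

theorem Finset.card_le_of_isChain_of_subset_Icc (hC : IsChain (· ≤ ·) (C : Set (ℕ × ℕ)))
    {t : ℕ × ℕ} (hCt : C ⊆ Finset.Icc (1, 1) t) : C.card ≤ t.1 + t.2 - 1 := by
  have hmaps : Set.MapsTo (fun p : ℕ × ℕ => p.1 + p.2) C (Finset.Icc 2 (t.1 + t.2)) := by
    intro p hp
    have := Finset.mem_Icc.1 (hCt hp)
    simp only [Prod.le_def] at this
    simp only [Finset.coe_Icc, Set.mem_Icc]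
    omega
  simpa using Finset.card_le_card_of_injOn _ hmaps hC.injOn_fst_add_snd

theorem Finset.card_eq_of_isChain_of_surjOn (hC : IsChain (· ≤ ·) (C : Set (ℕ × ℕ)))
    {t : ℕ × ℕ} (hCt : C ⊆ Finset.Icc (1, 1) t)
    (hsurj : Set.SurjOn (fun p : ℕ × ℕ => p.1 + p.2) C (Finset.Icc 2 (t.1 + t.2))) :
    C.card = t.1 + t.2 - 1 :=
  le_antisymm (C.card_le_of_isChain_of_subset_Icc hC hCt)
    (by simpa using Finset.card_le_card_of_surjOn _ hsurj)

end Chain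

section Ideal

variable {ρ : List ℕ}

theorem List.Pairwise.getD_le_getD (hsort : ρ.Pairwise (· ≥ ·)) {i j : ℕ} (hij : i ≤ j) :
    ρ.getD j 0 ≤ ρ.getD i 0 := by
  rcases lt_or_ge j ρ.length with hj | hj
  · have hi : i < ρ.length := hij.trans_lt hj
    rw [List.getD_eq_getElem _ _ hj, List.getD_eq_getElem _ _ hi]
    exact hsort.rel_get_of_le (a := ⟨i, hi⟩) (b := ⟨j, hj⟩) hij
  · rw [List.getD_eq_default _ _ hj]
    exact Nat.zero_le _

theorem one_one_le_of_mem_partitionIdeal {p : ℕ × ℕ} (hp : p ∈ partitionIdeal ρ) :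
    (1, 1) ≤ p :=
  ⟨hp.2.2.1, hp.1⟩

theorem mem_partitionIdeal_of_le (hsort : ρ.Pairwise (· ≥ ·)) {p q : ℕ × ℕ}
    (hq : q ∈ partitionIdeal ρ) (h₁ : (1, 1) ≤ p) (hpq : p ≤ q) : p ∈ partitionIdeal ρ := by
  obtain ⟨-, hq₂, -, hq₄⟩ := hq
  have := hsort.getD_le_getD (Nat.sub_le_sub_right hpq.2 1)
  exact ⟨h₁.2, hpq.2.trans hq₂, h₁.1, hpq.1.trans (hq₄.trans this)⟩

theorem maximal_mem_partitionIdeal_iff (hsort : ρ.Pairwise (· ≥ ·)) {p : ℕ × ℕ} :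
    Maximal (· ∈ partitionIdeal ρ) p ↔ 1 ≤ p.2 ∧ p.2 ≤ ρ.length ∧
      p.1 = ρ.getD (p.2 - 1) 0 ∧ ρ.getD (p.2 - 1) 0 ≠ ρ.getD p.2 0 := by
  have hstep := hsort.getD_le_getD (Nat.sub_le p.2 1)
  constructor
  · rintro ⟨⟨h₁, h₂, h₃, h₄⟩, hmax⟩
    have hright : (p.1 + 1, p.2) ∉ partitionIdeal ρ := fun h => by
      have := (hmax h ⟨Nat.le_succ _, le_rfl⟩).1
      omega
    have hup : (p.1, p.2 + 1) ∉ partitionIdeal ρ := fun h => by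
      have := (hmax h ⟨le_rfl, Nat.le_succ _⟩).2
      omega
    simp only [partitionIdeal, Set.mem_ofPred_eq, Nat.add_sub_cancel] at hright hup
    rcases lt_or_ge p.2 ρ.length with hlt | hge
    · omega
    · have : ρ.getD p.2 0 = 0 := List.getD_eq_default _ _ hge
      omega
  · rintro ⟨h₁, h₂, h₃, h₄⟩
    refine ⟨⟨h₁, h₂, by omega, h₃.le⟩, fun q ⟨_, _, _, hq₄⟩ hpq => ?_⟩
    rw [Prod.le_def] at hpq ⊢
    have hq₂ : q.2 ≤ p.2 := by
      by_contra! hlt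
      have := hsort.getD_le_getD (show p.2 ≤ q.2 - 1 by omega)
      omega
    have := hsort.getD_le_getD (show p.2 - 1 ≤ q.2 - 1 by omega)
    omega

theorem one_one_mem_partitionIdeal (hsort : ρ.Pairwise (· ≥ ·)) {p : ℕ × ℕ}
    (hp : p ∈ partitionIdeal ρ) : (1, 1) ∈ partitionIdeal ρ :=
  mem_partitionIdeal_of_le hsort hp le_rfl (one_one_le_of_mem_partitionIdeal hp)

end Ideal

namespace IsMaximalChain

variable {ρ : List ℕ} {C : Finset (ℕ × ℕ)}

theorem mem_of_forall_le_or_le (hC : IsMaximalChain ρ C) {m : ℕ × ℕ}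
    (hm : m ∈ partitionIdeal ρ) (hcomp : ∀ c ∈ C, m ≤ c ∨ c ≤ m) : m ∈ C := by
  have h := hC.2.2 (insert m C) (Finset.subset_insert _ _)
    (by rw [Finset.coe_insert]; exact Set.insert_subset hm hC.1)
    (by rw [Finset.coe_insert]; exact hC.2.1.insert fun c hc _ => hcomp c hc)
  exact h ▸ Finset.mem_insert_self m C

theorem one_one_mem (hC : IsMaximalChain ρ C) (h : (1, 1) ∈ partitionIdeal ρ) : (1, 1) ∈ C :=
  hC.mem_of_forall_le_or_le h fun _ hc => Or.inl (one_one_le_of_mem_partitionIdeal (hC.1 hc))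

theorem nonempty_iff (hsort : ρ.Pairwise (· ≥ ·)) (hC : IsMaximalChain ρ C) :
    C.Nonempty ↔ (partitionIdeal ρ).Nonempty :=
  ⟨fun ⟨_, hc⟩ => ⟨_, hC.1 hc⟩,
    fun ⟨_, hp⟩ => ⟨_, hC.one_one_mem (one_one_mem_partitionIdeal hsort hp)⟩⟩

theorem maximal_of_forall_le (hC : IsMaximalChain ρ C) {t : ℕ × ℕ} (ht : t ∈ C)
    (htop : ∀ c ∈ C, c ≤ t) : Maximal (· ∈ partitionIdeal ρ) t :=
  ⟨hC.1 ht, fun q hq htq =>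
    htop q (hC.mem_of_forall_le_or_le hq fun c hc => Or.inr ((htop c hc).trans htq))⟩

theorem surjOn_fst_add_snd (hsort : ρ.Pairwise (· ≥ ·)) (hC : IsMaximalChain ρ C)
    (h₁₁ : (1, 1) ∈ C) {t : ℕ × ℕ} (ht : t ∈ C) :
    Set.SurjOn (fun p : ℕ × ℕ => p.1 + p.2) C (Finset.Icc 2 (t.1 + t.2)) := by
  intro s hs
  simp only [Finset.coe_Icc, Set.mem_Icc] at hs
  by_contra hmiss
  have hmiss' : ∀ c ∈ C, c.1 + c.2 ≠ s := fun c hc hcs => hmiss ⟨c, hc, hcs⟩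
  have h₂ := hmiss' _ h₁₁
  have hst := hmiss' _ ht
  obtain ⟨p, hp, hpmax⟩ := (C.filter fun c => c.1 + c.2 < s).exists_max_image
    (fun c => c.1 + c.2) ⟨(1, 1), Finset.mem_filter.2 ⟨h₁₁, by dsimp at h₂ ⊢; omega⟩⟩
  obtain ⟨q, hq, hqmin⟩ := (C.filter fun c => s < c.1 + c.2).exists_min_image
    (fun c => c.1 + c.2) ⟨t, Finset.mem_filter.2 ⟨ht, by omega⟩⟩
  rw [Finset.mem_filter] at hp hq
  have hpq := hC.2.1.le_of_fst_add_snd_le hp.1 hq.1 (by omega)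
  rw [Prod.le_def] at hpq
  obtain ⟨m, hpm, hmq, hms⟩ : ∃ m : ℕ × ℕ, p ≤ m ∧ m ≤ q ∧ m.1 + m.2 = s :=
    ⟨(min q.1 (s - p.2), s - min q.1 (s - p.2)), by simp only [Prod.le_def]; omega,
      by simp only [Prod.le_def]; omega, by dsimp only; omega⟩
  have hm : m ∈ C := by
    refine hC.mem_of_forall_le_or_le (mem_partitionIdeal_of_le hsort (hC.1 hq.1)
      ((one_one_le_of_mem_partitionIdeal (hC.1 hp.1)).trans hpm) hmq) fun c hc => ?_
    rcases (hmiss' c hc).lt_or_gt with hlt | hgt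
    · exact Or.inr ((hC.2.1.le_of_fst_add_snd_le hc hp.1
        (hpmax c (Finset.mem_filter.2 ⟨hc, hlt⟩))).trans hpm)
    · exact Or.inl (hmq.trans (hC.2.1.le_of_fst_add_snd_le hq.1 hc
        (hqmin c (Finset.mem_filter.2 ⟨hc, hgt⟩))))
  exact hmiss' m hm hms

theorem exists_maximal_card_eq (hsort : ρ.Pairwise (· ≥ ·)) (hC : IsMaximalChain ρ C)
    (hne : C.Nonempty) :
    ∃ t, Maximal (· ∈ partitionIdeal ρ) t ∧ C.card = t.1 + t.2 - 1 := by
  obtain ⟨t, ht, htop⟩ := C.exists_max_image (fun p => p.1 + p.2) hne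
  have htop' : ∀ c ∈ C, c ≤ t := fun c hc => hC.2.1.le_of_fst_add_snd_le hc ht (htop c hc)
  have h₁₁ := hC.one_one_mem (one_one_mem_partitionIdeal hsort (hC.1 ht))
  refine ⟨t, hC.maximal_of_forall_le ht htop', C.card_eq_of_isChain_of_surjOn hC.2.1
    (fun c hc => Finset.mem_Icc.2 ⟨one_one_le_of_mem_partitionIdeal (hC.1 hc), htop' c hc⟩)
    (hC.surjOn_fst_add_snd hsort h₁₁ ht)⟩

end IsMaximalChain

theorem isMaximalChain_of_surjOn {ρ : List ℕ} {C : Finset (ℕ × ℕ)} (hsort : ρ.Pairwise (· ≥ ·))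
    {t : ℕ × ℕ} (ht : Maximal (· ∈ partitionIdeal ρ) t) (hC : IsChain (· ≤ ·) (C : Set (ℕ × ℕ)))
    (hCt : C ⊆ Finset.Icc (1, 1) t)
    (hsurj : Set.SurjOn (fun p : ℕ × ℕ => p.1 + p.2) C (Finset.Icc 2 (t.1 + t.2))) :
    IsMaximalChain ρ C := by
  have hCt' : ∀ c ∈ C, (1, 1) ≤ c ∧ c ≤ t := fun c hc => Finset.mem_Icc.1 (hCt hc)
  have htC : t ∈ C := by
    obtain ⟨p, hp, hpt⟩ := hsurj (Finset.mem_coe.2 (Finset.right_mem_Icc.2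
      (by have := one_one_le_of_mem_partitionIdeal ht.1; rw [Prod.le_def] at this; omega)))
    have hle := Prod.le_def.1 (hCt' p hp).2
    exact (Prod.ext (by dsimp at hpt; omega) (by dsimp at hpt; omega) : p = t) ▸ hp
  refine ⟨fun c hc => mem_partitionIdeal_of_le hsort ht.1 (hCt' c hc).1 (hCt' c hc).2, hC,
    fun C' hCC' hC'I hC' => (Finset.eq_of_subset_of_card_le hCC' ?_).symm⟩
  have hC't : C' ⊆ Finset.Icc (1, 1) t := by
    intro q hq
    refine Finset.mem_Icc.2 ⟨one_one_le_of_mem_partitionIdeal (hC'I hq), ?_⟩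
    rcases eq_or_ne q t with rfl | hne
    · exact le_rfl
    exact (hC' hq (hCC' htC) hne).elim id (ht.2 (hC'I hq))
  calc C'.card ≤ t.1 + t.2 - 1 := C'.card_le_of_isChain_of_subset_Icc hC' hC't
    _ = C.card := (C.card_eq_of_isChain_of_surjOn hC hCt hsurj).symm

/-- The lattice path from `(1, 1)` along the first row to `(a, 1)` and then up, indexed by rank. -/
def hookPath (a s : ℕ) : ℕ × ℕ :=
  if s ≤ a + 1 then (s - 1, 1) else (a, s - a)

theorem monotone_hookPath (a : ℕ) : Monotone (hookPath a) := by
  intro s s' hss'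
  unfold hookPath
  split_ifs <;> simp only [Prod.mk_le_mk] <;> omega

theorem fst_add_snd_hookPath {a s : ℕ} (hs : 2 ≤ s) : (hookPath a s).1 + (hookPath a s).2 = s := by
  unfold hookPath
  split_ifs <;> dsimp only <;> omega

theorem exists_isMaximalChain_card_eq {ρ : List ℕ} (hsort : ρ.Pairwise (· ≥ ·)) {t : ℕ × ℕ}
    (ht : Maximal (· ∈ partitionIdeal ρ) t) :
    ∃ C, IsMaximalChain ρ C ∧ C.card = t.1 + t.2 - 1 := by
  set C := (Finset.Icc 2 (t.1 + t.2)).image (hookPath t.1)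
  have hchain : IsChain (· ≤ ·) (C : Set (ℕ × ℕ)) := by
    rw [Finset.coe_image]
    exact (monotone_hookPath _).isChain_image (isChain_of_trichotomous _)
  have hCt : C ⊆ Finset.Icc (1, 1) t := by
    have h₁₁ := Prod.le_def.1 (one_one_le_of_mem_partitionIdeal ht.1)
    intro p hp
    obtain ⟨s, hs, rfl⟩ := Finset.mem_image.1 hp
    rw [Finset.mem_Icc] at hs ⊢
    unfold hookPath
    split_ifs <;> simp only [Prod.le_def] <;> omega
  have hsurj : Set.SurjOn (fun p : ℕ × ℕ => p.1 + p.2) C (Finset.Icc 2 (t.1 + t.2)) :=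
    fun s hs => ⟨hookPath t.1 s, Finset.mem_image_of_mem _ hs,
      fst_add_snd_hookPath (Finset.mem_Icc.1 hs).1⟩
  exact ⟨C, isMaximalChain_of_surjOn hsort ht hchain hCt hsurj,
    C.card_eq_of_isChain_of_surjOn hchain hCt hsurj⟩

theorem gorenstein_iff_general (ρ : List ℕ) (hsort : ρ.Pairwise (· ≥ ·)) :
    (∀ C₁ C₂ : Finset (ℕ × ℕ), IsMaximalChain ρ C₁ → IsMaximalChain ρ C₂ →
        C₁.card = C₂.card) ↔
      ∃ d : ℕ, ∀ i : ℕ, 1 ≤ i → i ≤ ρ.length →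
        ρ.getD (i - 1) 0 ≠ ρ.getD i 0 → ρ.getD (i - 1) 0 + i = d := by
  have hcorner {i : ℕ} (h₁ : 1 ≤ i) (h₂ : i ≤ ρ.length) (hi : ρ.getD (i - 1) 0 ≠ ρ.getD i 0) :
      ∃ C, IsMaximalChain ρ C ∧ C.card = ρ.getD (i - 1) 0 + i - 1 :=
    exists_isMaximalChain_card_eq (t := (_, i)) hsort
      ((maximal_mem_partitionIdeal_iff hsort).2 ⟨h₁, h₂, rfl, hi⟩)
  constructor
  · intro hall
    by_cases h : ∃ j, 1 ≤ j ∧ j ≤ ρ.length ∧ ρ.getD (j - 1) 0 ≠ ρ.getD j 0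
    · obtain ⟨j, hj₁, hj₂, hj⟩ := h
      obtain ⟨Cj, hCj, hCj_card⟩ := hcorner hj₁ hj₂ hj
      refine ⟨ρ.getD (j - 1) 0 + j, fun i h₁ h₂ hi => ?_⟩
      obtain ⟨Ci, hCi, hCi_card⟩ := hcorner h₁ h₂ hi
      have := hall Ci Cj hCi hCj
      omega
    · exact ⟨0, fun i h₁ h₂ hi => (h ⟨i, h₁, h₂, hi⟩).elim⟩
  · rintro ⟨d, hd⟩ C₁ C₂ h₁ h₂
    have hcard {C : Finset (ℕ × ℕ)} (hC : IsMaximalChain ρ C) (hne : C.Nonempty) :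
        C.card = d - 1 := by
      obtain ⟨t, ht, hCt⟩ := hC.exists_maximal_card_eq hsort hne
      obtain ⟨hi₁, hi₂, ht₁, hi⟩ := (maximal_mem_partitionIdeal_iff hsort).1 ht
      have := hd t.2 hi₁ hi₂ hi
      omega
    have hiff : C₁.Nonempty ↔ C₂.Nonempty :=
      (h₁.nonempty_iff hsort).trans (h₂.nonempty_iff hsort).symm
    by_cases hne : C₁.Nonempty
    · rw [hcard h₁ hne, hcard h₂ (hiff.1 hne)]
    · rw [Finset.not_nonempty_iff_eq_empty.1 hne,
        Finset.not_nonempty_iff_eq_empty.1 (mt hiff.2 hne)]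

/-- A partition `ρ₁ ≥ ρ₂ ≥ … ≥ ρ_r > 0` is Gorenstein (all maximal chains of its
order ideal have the same length) iff `ρᵢ + i` is constant over the indices `i`
with `ρᵢ ≠ ρᵢ₊₁` (where `ρ_{r+1} = 0`). -/
theorem gorenstein_iff (ρ : List ℕ) (hsort : ρ.Pairwise (· ≥ ·))
    (hpos : ∀ x ∈ ρ, 0 < x) :
    (∀ C₁ C₂ : Finset (ℕ × ℕ), IsMaximalChain ρ C₁ → IsMaximalChain ρ C₂ →
        C₁.card = C₂.card) ↔
      ∃ d : ℕ, ∀ i : ℕ, 1 ≤ i → i ≤ ρ.length →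
        ρ.getD (i - 1) 0 ≠ ρ.getD i 0 → ρ.getD (i - 1) 0 + i = d :=
  gorenstein_iff_general ρ hsort
end

section
/- For a 132-avoiding permutation π with inversion-table partition ρ (nonzero entries of the weakly decreasing inversion table), π avoids 231 if and only if all parts of ρ are distinct. -/
section Aux
variable {n : ℕ} {π : Equiv.Perm (Fin n)}

lemma invSet_subset (h : Avoids132 π) {i j : Fin n} (hij : i < j) (hpi : π i < π j) :
    (Finset.univ.filter fun m : Fin n => j < m ∧ π m < π j) ⊆
      (Finset.univ.filter fun m : Fin n => i < m ∧ π m < π i) := by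
  intro m hm
  simp only [Finset.mem_filter, Finset.mem_univ, true_and] at hm ⊢
  refine ⟨hij.trans hm.1, ?_⟩
  by_contra hle
  push_neg at hle
  have hne : π i ≠ π m := fun e => (hij.trans hm.1).ne (π.injective e)
  exact h ⟨i, j, m, hij, hm.1, lt_of_le_of_ne hle hne, hm.2⟩

lemma invTable_lt (h : Avoids132 π) {i j : Fin n} (hij : i < j) (hpi : π j < π i) :
    invTable π j < invTable π i := by
  have hsub : insert j (Finset.univ.filter fun m : Fin n => j < m ∧ π m < π j) ⊆
      (Finset.univ.filter fun m : Fin n => i < m ∧ π m < π i) := by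
    intro m hm
    rcases Finset.mem_insert.mp hm with rfl | hm
    · simp [hij, hpi]
    · simp only [Finset.mem_filter, Finset.mem_univ, true_and] at hm ⊢
      exact ⟨hij.trans hm.1, hm.2.trans hpi⟩
  have hnm : j ∉ (Finset.univ.filter fun m : Fin n => j < m ∧ π m < π j) := by simp
  have := Finset.card_le_card hsub
  rw [Finset.card_insert_of_notMem hnm] at this
  unfold invTable; omega

/-- from an equal nonzero pair with i < j, get a contradiction with Avoids231 -/
lemma pair_to_231 (h : Avoids132 π) (hav : Avoids231 π) {i j : Fin n} (hij : i < j)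
    (heq : invTable π i = invTable π j) (hj0 : invTable π j ≠ 0) : False := by
  have hpi : π i < π j := by
    rcases lt_trichotomy (π i) (π j) with h' | h' | h'
    · exact h'
    · exact absurd (π.injective h') hij.ne
    · exact absurd heq (invTable_lt h hij h').ne'
  obtain ⟨k, hk⟩ := Finset.card_ne_zero.mp hj0
  simp only [Finset.mem_filter, Finset.mem_univ, true_and] at hk
  have hki : π k < π i := by
    have := invSet_subset h hij hpi (by simp [hk.1, hk.2] :
      k ∈ Finset.univ.filter fun m : Fin n => j < m ∧ π m < π j)
    simp only [Finset.mem_filter, Finset.mem_univ, true_and] at this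
    exact this.2
  exact hav ⟨i, j, k, hij, hk.1, hki, hpi⟩

/-- from a 231 occurrence, get an equal nonzero pair; stated as induction on j - i -/
lemma occ_to_pair (h : Avoids132 π)
    (hd : ∀ i j : Fin n, i ≠ j → invTable π i ≠ 0 → invTable π j ≠ 0 →
      invTable π i ≠ invTable π j) :
    ∀ d : ℕ, ∀ i j k : Fin n, (j : ℕ) - (i : ℕ) ≤ d → i < j → j < k →
      π k < π i → π i < π j → False := by
  intro d
  induction d with
  | zero =>
    intro i j k hle hij _ _ _
    have : (i : ℕ) < j := hij
    omega
  | succ d ih =>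
    intro i j k hle hij hjk h1 h2
    by_cases hadj : (i : ℕ) + 1 = (j : ℕ)
    · -- adjacent: invTable i = invTable j, both nonzero
      have hsub1 := invSet_subset h hij h2
      have hsub2 : (Finset.univ.filter fun m : Fin n => i < m ∧ π m < π i) ⊆
          (Finset.univ.filter fun m : Fin n => j < m ∧ π m < π j) := by
        intro m hm
        simp only [Finset.mem_filter, Finset.mem_univ, true_and] at hm ⊢
        have hmj : j < m := by
          rcases lt_or_eq_of_le (show (j:ℕ) ≤ (m:ℕ) by
            have : (i:ℕ) < m := hm.1; omega) with h' | h'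
          · exact h'
          · exfalso
            have : j = m := Fin.ext h'
            subst this
            exact absurd hm.2 (asymm h2)
        exact ⟨hmj, hm.2.trans h2⟩
      have heq : invTable π i = invTable π j :=
        le_antisymm (Finset.card_le_card hsub2) (Finset.card_le_card hsub1)
      have hki : k ∈ Finset.univ.filter fun m : Fin n => i < m ∧ π m < π i := by
        simp [hij.trans hjk, h1]
      have hkj : k ∈ Finset.univ.filter fun m : Fin n => j < m ∧ π m < π j := by
        simp [hjk, h1.trans h2]
      exact hd i j hij.ne (Finset.card_ne_zero_of_mem hki)
        (Finset.card_ne_zero_of_mem hkj) heq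
    · -- non-adjacent: shrink
      have hij' : (i : ℕ) < j := hij
      have hlt : (i : ℕ) + 1 < (j : ℕ) := by omega
      have hin : (i : ℕ) + 1 < n := lt_trans hlt j.isLt
      set m : Fin n := ⟨(i : ℕ) + 1, hin⟩ with hm
      have him : i < m := by simp [Fin.lt_def, hm]
      have hmj : m < j := by simp [Fin.lt_def, hm, hlt]
      rcases lt_trichotomy (π i) (π m) with h' | h' | h'
      · exact ih i m k (by simp [hm]; omega) him (hmj.trans hjk) h1 h'
      · exact him.ne (π.injective h')
      · rcases lt_trichotomy (π k) (π m) with h'' | h'' | h''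
        · exact ih m j k (by simp [hm]; omega) hmj hjk h'' (h'.trans h2)
        · exact (hmj.trans hjk).ne (π.injective h''.symm)
        · exact h ⟨m, j, k, hmj, hjk, h'', h1.trans h2⟩

end Aux

/-- For a 132-avoiding permutation, avoiding 231 is equivalent to all nonzero
entries of its (weakly decreasing) inversion table being distinct. -/
theorem avoids231_iff_distinct_parts (n : ℕ) (π : Equiv.Perm (Fin n))
    (h : Avoids132 π) :
    Avoids231 π ↔ ∀ i j : Fin n, i ≠ j → invTable π i ≠ 0 → invTable π j ≠ 0 →
      invTable π i ≠ invTable π j := by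
  constructor
  · intro hav i j hij hi0 hj0 heq
    rcases lt_or_gt_of_ne hij with h' | h'
    · exact pair_to_231 h hav h' heq hj0
    · exact pair_to_231 h hav h' heq.symm hi0
  · intro hd hocc
    obtain ⟨i, j, k, hij, hjk, h1, h2⟩ := hocc
    exact occ_to_pair h hd ((j : ℕ) - i) i j k le_rfl hij hjk h1 h2
end

section
/- For a 132-avoiding permutation π with inversion-table partition ρ (nonzero entries of the weakly decreasing inversion table), π avoids 321 if and only if all parts of ρ are equal. Consequently, the number of indecomposable permutations with exactly k ≥ 1 inversions avoiding both 132 and 321 equals the number of divisors of k. -/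
/-!
For a 132-avoiding `π` and positions `i < j` with `invTable π j ≠ 0`, avoiding 321 forces
`π i < π j`, and then the entries after `i` below `π i` are exactly the entries after `j` below
`π j`. Conversely, a 321 pattern at `i < j < k` gives `invTable π i > invTable π j > 0`.

For the count, let `a = π 0`. As `π` avoids 132 the entries `≥ a` appear in increasing order, as it
avoids 321 so do the entries `< a`, and indecomposability forbids an entry `π q ≥ a` to the right
of one `< a`: the positions left of `q` would carry exactly the values below `π q`, so `π` would
split at `q`. Hence `i ↦ (π i - a) mod n` is strictly increasing, so it is the identity and `π` is
the cyclic shift `i ↦ (i + a) mod n`, which has `(n - a) * a` inversions. These permutations thus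
correspond to the factorizations `k = m * a`.
-/

open Finset

variable {n : ℕ} {π : Equiv.Perm (Fin n)}

lemma invTable_pos {j k : Fin n} (hjk : j < k) (hkj : π k < π j) : 0 < invTable π j :=
  card_pos.2 ⟨k, by simp [hjk, hkj]⟩

lemma invTable_lt_of_lt {i j : Fin n} (hij : i < j) (hji : π j < π i) :
    invTable π j < invTable π i := by
  refine card_lt_card ((ssubset_iff_of_subset fun l hl => ?_).2 ⟨j, by simp [hij, hji], by simp⟩)
  simp only [mem_filter, mem_univ, true_and] at hl ⊢
  exact ⟨hij.trans hl.1, hl.2.trans hji⟩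

lemma avoids321_of_invTable_eq
    (heq : ∀ i j, invTable π i ≠ 0 → invTable π j ≠ 0 → invTable π i = invTable π j) :
    Avoids321 π := by
  rintro ⟨i, j, k, hij, hjk, hkj, hji⟩
  have hj := invTable_pos hjk hkj
  have hlt := invTable_lt_of_lt hij hji
  exact hlt.ne (heq j i hj.ne' (by omega))

lemma invTable_eq_of_lt (h132 : Avoids132 π) (h321 : Avoids321 π) {i j : Fin n} (hij : i < j)
    (hj : invTable π j ≠ 0) : invTable π i = invTable π j := by
  obtain ⟨k, hk⟩ := card_pos.1 (Nat.pos_of_ne_zero hj)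
  simp only [mem_filter, mem_univ, true_and] at hk
  obtain ⟨hjk, hkj⟩ := hk
  have hπij : π i < π j :=
    lt_of_le_of_ne (not_lt.1 fun h => h321 ⟨i, j, k, hij, hjk, hkj, h⟩) (π.injective.ne hij.ne)
  unfold invTable
  congr 1
  ext l
  simp only [mem_filter, mem_univ, true_and]
  constructor
  · rintro ⟨hil, hli⟩
    refine ⟨lt_of_not_ge fun hlj => ?_, hli.trans hπij⟩
    have hlj : l < j := lt_of_le_of_ne hlj (by rintro rfl; exact lt_asymm hli hπij)
    rcases lt_or_gt_of_ne (π.injective.ne (hlj.trans hjk).ne) with h | h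
    · exact h132 ⟨l, j, k, hlj, hjk, h, hkj⟩
    · exact h321 ⟨i, l, k, hil, hlj.trans hjk, h, hli⟩
  · rintro ⟨hjl, hlj⟩
    exact ⟨hij.trans hjl, lt_of_le_of_ne (not_lt.1 fun h => h132 ⟨i, j, l, hij, hjl, h, hlj⟩)
      (π.injective.ne (hij.trans hjl).ne')⟩

theorem Avoids132.avoids321_iff_invTable_eq (h132 : Avoids132 π) :
    Avoids321 π ↔ ∀ i j, invTable π i ≠ 0 → invTable π j ≠ 0 → invTable π i = invTable π j := by
  refine ⟨fun h321 i j hi hj => ?_, avoids321_of_invTable_eq⟩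
  rcases lt_trichotomy i j with h | rfl | h
  · exact invTable_eq_of_lt h132 h321 h hj
  · rfl
  · exact (invTable_eq_of_lt h132 h321 h hi).symm

lemma Fin.card_filter_le_val (m : ℕ) : #{i : Fin n | m ≤ (i : ℕ)} = n - m := by
  have := card_filter_add_card_filter_not (s := univ) (fun i : Fin n => (i : ℕ) < m)
  simp only [Fin.card_filter_val_lt, not_lt, card_univ, Fintype.card_fin] at this
  omega

section CyclicShift

def IsCyclicShift (π : Equiv.Perm (Fin n)) (a : ℕ) : Prop :=
  ∀ i : Fin n, (π i : ℕ) = (i + a) % n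

noncomputable def cyclicShift (n a : ℕ) : Equiv.Perm (Fin n) :=
  Equiv.ofBijective (fun i => ⟨(i + a) % n, Nat.mod_lt _ i.pos⟩) <|
    Finite.injective_iff_bijective.1 fun i j hij => by
      have h : (i : ℕ) ≡ j [MOD n] := Nat.ModEq.add_right_cancel' a (congrArg Fin.val hij)
      exact Fin.ext (by rwa [Nat.ModEq, Nat.mod_eq_of_lt i.2, Nat.mod_eq_of_lt j.2] at h)

lemma isCyclicShift_cyclicShift (n a : ℕ) : IsCyclicShift (cyclicShift n a) a := fun _ => rfl

variable {a : ℕ}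

lemma IsCyclicShift.val_apply (h : IsCyclicShift π a) (ha : a < n) (i : Fin n) :
    (π i : ℕ) = if n ≤ i + a then i + a - n else i + a := by
  rw [h i, Nat.add_mod_eq_ite, Nat.mod_eq_of_lt i.2, Nat.mod_eq_of_lt ha]

lemma IsCyclicShift.sigma_eq {n' : ℕ} {σ : Equiv.Perm (Fin n')} (h : IsCyclicShift π a)
    (h' : IsCyclicShift σ a) (hn : n = n') :
    (⟨n, π⟩ : Σ n : ℕ, Equiv.Perm (Fin n)) = ⟨n', σ⟩ := by
  subst hn
  rw [Equiv.ext fun i => Fin.ext ((h i).trans (h' i).symm)]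

lemma IsCyclicShift.avoids132 (h : IsCyclicShift π a) (ha : a < n) : Avoids132 π := by
  rintro ⟨i, j, k, hij, hjk, hik, hkj⟩
  simp only [Fin.lt_def, h.val_apply ha] at *
  have := k.2
  split_ifs at hik hkj <;> omega

lemma IsCyclicShift.avoids321 (h : IsCyclicShift π a) (ha : a < n) : Avoids321 π := by
  rintro ⟨i, j, k, hij, hjk, hkj, hji⟩
  simp only [Fin.lt_def, h.val_apply ha] at *
  have := k.2
  split_ifs at hkj hji <;> omega

lemma IsCyclicShift.indecomposable (h : IsCyclicShift π a) (ha₀ : 0 < a) (ha : a < n) :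
    Indecomposable π := by
  refine ⟨by omega, fun ⟨j, hj₀, hjn, hj⟩ => ?_⟩
  -- the entry at position `min (j - 1) (n - a - 1)` is at least `j`
  have := hj ⟨min (j - 1) (n - a - 1), by omega⟩ (by simp only; omega)
  rw [h.val_apply ha] at this
  split_ifs at this <;> simp only at * <;> omega

lemma IsCyclicShift.inversions_eq (h : IsCyclicShift π a) (ha : a < n) :
    inversions π = (n - a) * a := by
  have : ({p | p.1 < p.2 ∧ π p.2 < π p.1} : Finset (Fin n × Fin n)) =
      ({i | (i : ℕ) < n - a} : Finset (Fin n)) ×ˢ ({j | n - a ≤ (j : ℕ)} : Finset (Fin n)) := by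
    ext ⟨i, j⟩
    simp only [mem_filter, mem_univ, true_and, mem_product, Fin.lt_def, h.val_apply ha]
    have := j.2
    split_ifs <;> omega
  rw [inversions, this, card_product, Fin.card_filter_val_lt, Fin.card_filter_le_val]
  congr 1 <;> omega

lemma IsCyclicShift.card_filter_apply_lt (h : IsCyclicShift π a) (ha : a < n) :
    #{i | π i < i} = a := by
  have : ({i | π i < i} : Finset (Fin n)) = ({i | n - a ≤ (i : ℕ)} : Finset (Fin n)) := by
    ext i
    simp only [mem_filter, mem_univ, true_and, Fin.lt_def, h.val_apply ha]
    have := i.2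
    split_ifs <;> omega
  rw [this, Fin.card_filter_le_val]
  omega

end CyclicShift

lemma Fin.eq_of_forall_lt_iff_perm_lt {q v : Fin n} (h : ∀ p, p < q ↔ π p < v) : q = v := by
  have hcard := card_equiv π (s := {p | p < q}) (t := {x | x < v}) (by simpa using h)
  simpa [filter_gt_eq_Iio, Fin.card_Iio, Fin.val_inj] using hcard

lemma Avoids132.strictMonoOn_apply_ge {o : Fin n} (h132 : Avoids132 π) (ho : IsBot o) :
    StrictMonoOn π {i | π o ≤ π i} := by
  intro i _ j hj hij
  have hoj : π o < π j := lt_of_le_of_ne hj (π.injective.ne ((ho i).trans_lt hij).ne)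
  rcases (ho i).lt_or_eq with hoi | rfl
  · exact lt_of_le_of_ne (not_lt.1 fun h => h132 ⟨o, i, j, hoi, hij, hoj, h⟩)
      (π.injective.ne hij.ne)
  · exact hoj

lemma Avoids321.strictMonoOn_apply_lt {o : Fin n} (h321 : Avoids321 π) (ho : IsBot o) :
    StrictMonoOn π {i | π i < π o} := by
  intro i (hi : π i < π o) j _ hij
  have hoi : o < i := lt_of_le_of_ne (ho i) (by rintro rfl; exact lt_irrefl _ hi)
  exact lt_of_le_of_ne (not_lt.1 fun h => h321 ⟨o, i, j, hoi, hij, h, hi⟩)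
    (π.injective.ne hij.ne)

lemma Indecomposable.apply_lt_of_lt_of_apply_lt (h132 : Avoids132 π) (h321 : Avoids321 π)
    (hind : Indecomposable π) {o i q : Fin n} (ho : IsBot o) (hiq : i < q) (hi : π i < π o) :
    π q < π o := by
  by_contra! hq
  -- then the first `q` positions carry exactly the values below `π q = q`, so `π` splits at `q`
  have hsplit : ∀ p, p < q ↔ π p < π q := by
    intro p
    constructor
    · intro hpq
      rcases lt_or_ge (π p) (π o) with hp | hp
      · exact hp.trans_le hq
      · exact h132.strictMonoOn_apply_ge ho hp hq hpq
    · intro hpq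
      refine lt_of_not_ge fun hqp => ?_
      rcases hqp.lt_or_eq with hqp | rfl
      · rcases lt_or_ge (π p) (π o) with hp | hp
        · exact h132 ⟨i, q, p, hiq, hqp,
            h321.strictMonoOn_apply_lt ho hi hp (hiq.trans hqp), hp.trans_le hq⟩
        · exact lt_asymm hpq (h132.strictMonoOn_apply_ge ho hq hp hqp)
      · exact lt_irrefl _ hpq
  have hqv := Fin.eq_of_forall_lt_iff_perm_lt hsplit
  refine hind.2 ⟨q, (Nat.zero_le _).trans_lt hiq, q.2, fun p hp => ?_⟩
  rw [hqv]
  exact (hsplit p).1 hp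

theorem isCyclicShift_of_indecomposable (h132 : Avoids132 π) (h321 : Avoids321 π)
    (hind : Indecomposable π) : IsCyclicShift π (π ⟨0, hind.1⟩) := by
  set o : Fin n := ⟨0, hind.1⟩
  have ho : IsBot o := fun p => Nat.zero_le p
  set a : ℕ := (π o : ℕ)
  let rank : Fin n → Fin n := fun i =>
    ⟨if a ≤ π i then π i - a else π i + n - a, by have := (π i).2; split_ifs <;> omega⟩
  have hrank : StrictMono rank := by
    intro i j hij
    simp only [rank, Fin.mk_lt_mk]
    have := (π i).2
    split_ifs with hi hj hj
    · have := h132.strictMonoOn_apply_ge ho hi hj hij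
      rw [Fin.lt_def] at this
      omega
    · omega
    · exact absurd (hind.apply_lt_of_lt_of_apply_lt h132 h321 ho hij (lt_of_not_ge hi))
        (not_lt.2 hj)
    · have := h321.strictMonoOn_apply_lt ho (lt_of_not_ge hi) (lt_of_not_ge hj) hij
      rw [Fin.lt_def] at this
      omega
  intro i
  have hi := congrArg Fin.val (congrFun hrank.eq_id i)
  have := (π i).2
  have ha : a < n := (π o).2
  simp only [rank, id] at hi
  rw [Nat.add_mod_eq_ite, Nat.mod_eq_of_lt i.2, Nat.mod_eq_of_lt ha]
  split_ifs at hi ⊢ <;> omega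

lemma cyclicShift_properties {m a : ℕ} (hm : 0 < m) (ha : 0 < a) :
    Indecomposable (cyclicShift (m + a) a) ∧ inversions (cyclicShift (m + a) a) = m * a ∧
      Avoids132 (cyclicShift (m + a) a) ∧ Avoids321 (cyclicShift (m + a) a) := by
  have h := isCyclicShift_cyclicShift (m + a) a
  refine ⟨h.indecomposable ha (by omega), ?_, h.avoids132 (by omega), h.avoids321 (by omega)⟩
  rw [h.inversions_eq (by omega), Nat.add_sub_cancel]

theorem card_indecomposable_avoids132_avoids321 {k : ℕ} (hk : k ≠ 0) :
    Nat.card {p : Σ n : ℕ, Equiv.Perm (Fin n) //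
        Indecomposable p.2 ∧ inversions p.2 = k ∧ Avoids132 p.2 ∧ Avoids321 p.2} =
      #k.divisorsAntidiagonal := by
  rw [← Nat.card_eq_finsetCard]
  have hmem : ∀ x ∈ k.divisorsAntidiagonal, 0 < x.1 ∧ 0 < x.2 ∧ x.1 * x.2 = k := by
    intro x hx
    obtain ⟨hx, hk⟩ := Nat.mem_divisorsAntidiagonal.1 hx
    obtain ⟨h₁, h₂⟩ := Nat.mul_ne_zero_iff.1 (hx ▸ hk)
    exact ⟨Nat.pos_of_ne_zero h₁, Nat.pos_of_ne_zero h₂, hx⟩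
  let shift (x : k.divisorsAntidiagonal) :
      {p : Σ n : ℕ, Equiv.Perm (Fin n) //
        Indecomposable p.2 ∧ inversions p.2 = k ∧ Avoids132 p.2 ∧ Avoids321 p.2} :=
    ⟨⟨_, cyclicShift (x.1.1 + x.1.2) x.1.2⟩, by
      obtain ⟨hm, ha, hk⟩ := hmem x x.2
      simpa only [hk] using cyclicShift_properties hm ha⟩
  refine (Nat.card_eq_of_bijective shift ⟨fun x y hxy => ?_, ?_⟩).symm
  · obtain ⟨hxm, -, -⟩ := hmem x x.2
    obtain ⟨hym, -, -⟩ := hmem y y.2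
    have hn : x.1.1 + x.1.2 = y.1.1 + y.1.2 := congrArg (fun p => p.1.1) hxy
    have ha := congrArg (fun p => #{i | p.1.2 i < i}) hxy
    simp only [shift,
      (isCyclicShift_cyclicShift _ _).card_filter_apply_lt (Nat.lt_add_of_pos_left hxm),
      (isCyclicShift_cyclicShift _ _).card_filter_apply_lt (Nat.lt_add_of_pos_left hym)] at ha
    exact Subtype.ext (Prod.ext (by omega) ha)
  · rintro ⟨⟨n, π⟩, hind, hinv, h132, h321⟩
    have h := isCyclicShift_of_indecomposable h132 h321 hind
    have ha : (π ⟨0, hind.1⟩ : ℕ) < n := Fin.is_lt _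
    rw [h.inversions_eq ha] at hinv
    exact ⟨⟨(_, _), Nat.mem_divisorsAntidiagonal.2 ⟨hinv, hk⟩⟩,
      Subtype.ext ((isCyclicShift_cyclicShift _ _).sigma_eq h (Nat.sub_add_cancel ha.le))⟩

/-- For a 132-avoiding permutation, avoiding 321 is equivalent to all nonzero
entries of its inversion table being equal. Consequently, for `k ≥ 1` the number
of indecomposable permutations with exactly `k` inversions avoiding 132 and 321
equals the number of divisors of `k`. -/
theorem avoids321_iff_equal_parts_and_count :
    (∀ (n : ℕ) (π : Equiv.Perm (Fin n)), Avoids132 π →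
      (Avoids321 π ↔ ∀ i j : Fin n, invTable π i ≠ 0 → invTable π j ≠ 0 →
        invTable π i = invTable π j)) ∧
    (∀ k : ℕ, 1 ≤ k →
      Nat.card {p : Σ n : ℕ, Equiv.Perm (Fin n) //
          Indecomposable p.2 ∧ inversions p.2 = k ∧ Avoids132 p.2 ∧ Avoids321 p.2}
        = k.divisors.card) := by
  refine ⟨fun n π h132 => h132.avoids321_iff_invTable_eq, fun k hk => ?_⟩
  rw [card_indecomposable_avoids132_avoids321 (by omega), ← Nat.map_div_right_divisors, card_map]
end

section
/- If an indecomposable permutation π avoids 132 and 321, then π avoids 213; hence the set of indecomposable permutations with k inversions avoiding {132, 213, 321} equals the set avoiding {132, 321}. -/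
section
variable {n : ℕ}

theorem key_avoid (π : Equiv.Perm (Fin n)) (hind : Indecomposable π)
    (h132 : Avoids132 π) (h321 : Avoids321 π) : Avoids213 π := by
  rintro ⟨i, j, k, hij, hjk, hji, hik⟩
  obtain ⟨-, hdec⟩ := hind
  -- Step 1: π k is a left-to-right maximum
  have hmax : ∀ p : Fin n, p < k → π p < π k := by
    intro p hp
    by_contra h
    push_neg at h
    rcases lt_trichotomy p i with hpi | rfl | hpi
    · exact h321 ⟨p, i, j, hpi, hij, hji, lt_of_lt_of_le hik h⟩
    · exact absurd (lt_of_lt_of_le hik h) (lt_irrefl _)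
    · have hne : π k ≠ π p := fun e => (ne_of_lt hp).symm (π.injective e)
      exact h132 ⟨i, p, k, hpi, hp, hik, lt_of_le_of_ne h hne⟩
  -- Step 2: all positions < k map to values < k
  have hcut : ∀ p : Fin n, (p : ℕ) < (k : ℕ) → ((π p : ℕ)) < (k : ℕ) := by
    by_contra h
    push_neg at h
    obtain ⟨p, hpk, hkp⟩ := h
    set A : Finset (Fin n) := Finset.univ.filter (fun x : Fin n => (x : ℕ) < (k : ℕ)) with hA
    have hpA : p ∈ A := Finset.mem_filter.mpr ⟨Finset.mem_univ _, hpk⟩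
    obtain ⟨v, hvA, hvq⟩ : ∃ v ∈ A, π.symm v ∉ A := by
      by_contra hall
      push_neg at hall
      have hsub : A.image π.symm ⊆ A := by
        intro x hx
        obtain ⟨v, hv, rfl⟩ := Finset.mem_image.mp hx
        exact hall v hv
      have hcard : (A.image π.symm).card = A.card :=
        Finset.card_image_of_injective _ π.symm.injective
      have heq : A.image π.symm = A := Finset.eq_of_subset_of_card_le hsub (le_of_eq hcard.symm)
      rw [← heq] at hpA
      obtain ⟨v, hv, hvp⟩ := Finset.mem_image.mp hpA
      have hpv : π p = v := by rw [← hvp]; simp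
      rw [hA, Finset.mem_filter] at hv
      have : (π p : ℕ) < (k : ℕ) := hpv ▸ hv.2
      omega
    set q := π.symm v with hq
    have hπq : π q = v := by simp [hq]
    rw [hA, Finset.mem_filter] at hvA hvq
    have hvk : (v : ℕ) < (k : ℕ) := hvA.2
    have hkq : (k : ℕ) ≤ (q : ℕ) := by
      by_contra h'
      exact hvq ⟨Finset.mem_univ _, Nat.lt_of_not_le h'⟩
    have hπqk : π q < π k := by
      have h1 : π p < π k := hmax p (Fin.lt_def.mpr hpk)
      have h1' : (π p : ℕ) < (π k : ℕ) := h1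
      have : (π q : ℕ) < (π k : ℕ) := by rw [hπq]; omega
      exact this
    have hqkne : k < q := by
      rcases lt_or_eq_of_le hkq with h' | h'
      · exact Fin.lt_def.mpr h'
      · exact absurd ((Fin.ext h') ▸ hπqk) (lt_irrefl _)
    rcases lt_trichotomy (π q) (π j) with hlt | heq | hgt
    · exact h321 ⟨i, j, q, hij, lt_trans hjk hqkne, hlt, hji⟩
    · have : q = j := π.injective heq
      subst this
      exact absurd (lt_trans hjk hqkne) (lt_irrefl _)
    · exact h132 ⟨j, k, q, hjk, hqkne, hgt, hπqk⟩
  -- hence decomposable at cut k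
  refine hdec ⟨(k : ℕ), ?_, k.isLt, hcut⟩
  have h1 : (i : ℕ) < (j : ℕ) := hij
  have h2 : (j : ℕ) < (k : ℕ) := hjk
  omega
end

/-- If an indecomposable permutation avoids 132 and 321 then it avoids 213; hence
the set of indecomposable permutations with `k` inversions avoiding
`{132, 213, 321}` equals the set avoiding `{132, 321}`. -/
theorem indecomposable_avoids132_avoids321_avoids213 :
    (∀ (n : ℕ) (π : Equiv.Perm (Fin n)),
      Indecomposable π → Avoids132 π → Avoids321 π → Avoids213 π) ∧
    (∀ k n : ℕ,
      {π : Equiv.Perm (Fin n) | Indecomposable π ∧ inversions π = k ∧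
        Avoids132 π ∧ Avoids213 π ∧ Avoids321 π}
      = {π : Equiv.Perm (Fin n) | Indecomposable π ∧ inversions π = k ∧
        Avoids132 π ∧ Avoids321 π}) := by
  constructor
  · exact fun n π => key_avoid π
  · intro k n
    ext π
    simp only [Set.mem_setOf_eq]
    constructor
    · rintro ⟨h1, h2, h3, _, h5⟩; exact ⟨h1, h2, h3, h5⟩
    · rintro ⟨h1, h2, h3, h5⟩; exact ⟨h1, h2, h3, key_avoid π h1 h3 h5, h5⟩
end
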